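/- arXiv:1405.6008 — 10 statements merged into one kernel-verified Lean document; each statement's English description precedes it below -/
import Mathlib

section
/- For every positive integer m and every positive integer q, the number of pairs (i, j) of nonnegative integers with j ≤ q − 1 and q·i + (q+1)·j < m is at least m − q(q−1)/2. -/
/-!
Writing `s = q * (i + j) + j` shows that `(i, j) ↦ q * i + (q + 1) * j` is injective on `j < q`
and that its image is the numerical semigroup `⟨q, q + 1⟩`: the `s` with `s % q ≤ s / q`.
The gaps `s / q < s % q` are indexed by pairs `s / q < s % q < q`, so there are
`0 + 1 + ⋯ + (q - 1) = q * (q - 1) / 2` of them, and at most that many `s < m` are missed.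
-/

open Finset

def weightedDegree (q : ℕ) (ij : ℕ × ℕ) : ℕ := q * ij.1 + (q + 1) * ij.2

section WeightedDegree

variable {q : ℕ} {ij : ℕ × ℕ}

lemma weightedDegree_eq (q : ℕ) (ij : ℕ × ℕ) :
    weightedDegree q ij = q * (ij.1 + ij.2) + ij.2 := by
  unfold weightedDegree; ring

lemma weightedDegree_mod (h : ij.2 < q) : weightedDegree q ij % q = ij.2 := by
  rw [weightedDegree_eq, Nat.mul_add_mod, Nat.mod_eq_of_lt h]

lemma weightedDegree_div (h : ij.2 < q) : weightedDegree q ij / q = ij.1 + ij.2 := by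
  rw [weightedDegree_eq, Nat.mul_add_div (by omega), Nat.div_eq_of_lt h, add_zero]

lemma weightedDegree_injOn (q : ℕ) : Set.InjOn (weightedDegree q) {ij | ij.2 < q} := by
  intro ij (hj : ij.2 < q) ij' (hj' : ij'.2 < q) h
  have hmod : ij.2 = ij'.2 := by
    rw [← weightedDegree_mod hj, ← weightedDegree_mod hj', h]
  have hdiv : ij.1 + ij.2 = ij'.1 + ij'.2 := by
    rw [← weightedDegree_div hj, ← weightedDegree_div hj', h]
  exact Prod.ext (by omega) hmod

lemma weightedDegree_sub_mod {s : ℕ} (h : s % q ≤ s / q) :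
    weightedDegree q (s / q - s % q, s % q) = s := by
  rw [weightedDegree_eq, Nat.sub_add_cancel h, Nat.div_add_mod]

lemma image_weightedDegree (hq : 0 < q) (m : ℕ) :
    weightedDegree q '' {ij | ij.2 < q ∧ weightedDegree q ij < m} =
      ↑{s ∈ range m | s % q ≤ s / q} := by
  ext s
  simp only [Set.mem_image, Set.mem_ofPred_eq, coe_filter, mem_range]
  constructor
  · rintro ⟨ij, ⟨hj, hlt⟩, rfl⟩
    rw [weightedDegree_mod hj, weightedDegree_div hj]
    exact ⟨hlt, Nat.le_add_left _ _⟩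
  · rintro ⟨hs, hgood⟩
    refine ⟨(s / q - s % q, s % q), ⟨Nat.mod_lt s hq, ?_⟩, weightedDegree_sub_mod hgood⟩
    rwa [weightedDegree_sub_mod hgood]

end WeightedDegree

lemma card_filter_div_lt_mod_le (m : ℕ) {q : ℕ} (hq : 0 < q) :
    #{s ∈ range m | s / q < s % q} ≤ q * (q - 1) / 2 := by
  calc #{s ∈ range m | s / q < s % q}
      ≤ #((range q).sigma fun r => range r) := by
        refine card_le_card_of_injOn (fun s => ⟨s % q, s / q⟩) ?_ ?_
        · intro s hs
          simp only [coe_filter, mem_range, Set.mem_ofPred_eq] at hs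
          simp only [coe_sigma, Set.mem_sigma_iff, coe_range, Set.mem_Iio]
          exact ⟨Nat.mod_lt s hq, hs.2⟩
        · intro s _ t _ h
          simp only [Sigma.mk.injEq, heq_eq_eq] at h
          rw [← Nat.div_add_mod s q, ← Nat.div_add_mod t q, h.1, h.2]
    _ = q * (q - 1) / 2 := by
        rw [card_sigma]
        simp only [card_range]
        exact sum_range_id q

theorem stmt_0_general (m q : ℕ) (hq : 0 < q) :
    m - q * (q - 1) / 2 ≤
      Set.ncard {ij : ℕ × ℕ | ij.2 ≤ q - 1 ∧ q * ij.1 + (q + 1) * ij.2 < m} := by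
  have hS : {ij : ℕ × ℕ | ij.2 ≤ q - 1 ∧ q * ij.1 + (q + 1) * ij.2 < m} =
      {ij | ij.2 < q ∧ weightedDegree q ij < m} := by
    ext ij
    simp only [Set.mem_ofPred_eq, weightedDegree]
    omega
  have hinj : Set.InjOn (weightedDegree q) {ij | ij.2 < q ∧ weightedDegree q ij < m} :=
    (weightedDegree_injOn q).mono fun _ h => h.1
  rw [hS, ← hinj.ncard_image, image_weightedDegree hq, Set.ncard_coe_finset]
  have hsplit := card_filter_add_card_filter_not (s := range m) (fun s => s % q ≤ s / q)
  simp only [not_le, card_range] at hsplit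
  have hgaps := card_filter_div_lt_mod_le m hq
  omega

/-- For every positive integer `m` and every positive integer `q`, the number of pairs
`(i, j)` of nonnegative integers with `j ≤ q - 1` and `q*i + (q+1)*j < m` is at least
`m - q*(q-1)/2`. -/
theorem stmt_0 (m q : ℕ) (hm : 0 < m) (hq : 0 < q) :
    m - q * (q - 1) / 2 ≤
      Set.ncard {ij : ℕ × ℕ | ij.2 ≤ q - 1 ∧ q * ij.1 + (q + 1) * ij.2 < m} :=
  stmt_0_general m q hq
end

section
/- For every function γ assigning to each point (α, β) of the Hermitian curve a value γ(α,β) ∈ F, there exists a bivariate polynomial p ∈ F[x, y] with deg_x p ≤ q² − 1 and deg_y p ≤ q − 1 (and hence deg_{q,q+1}(p) < q³ + q² − q) such that p(α, β) = γ(α,β) for every point (α, β) of the Hermitian curve. -/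
open MvPolynomial Polynomial

noncomputable def toMv2 {F : Type} [CommSemiring F] (i : Fin 2) (P : Polynomial F) :
    MvPolynomial (Fin 2) F :=
  ∑ n ∈ P.support, MvPolynomial.monomial (Finsupp.single i n) (P.coeff n)

lemma eval_toMv2 {F : Type} [CommSemiring F] (i : Fin 2) (P : Polynomial F) (v : Fin 2 → F) :
    MvPolynomial.eval v (toMv2 i P) = P.eval (v i) := by
  rw [toMv2, map_sum, Polynomial.eval_eq_sum, Polynomial.sum]
  refine Finset.sum_congr rfl fun n hn => ?_
  rw [MvPolynomial.eval_monomial, Finsupp.prod_single_index (by simp)]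

lemma support_toMv2 {F : Type} [CommSemiring F] (i : Fin 2) (P : Polynomial F)
    {s : Fin 2 →₀ ℕ} (hs : s ∈ (toMv2 i P).support) :
    ∃ n ≤ P.natDegree, s = Finsupp.single i n := by
  have h := MvPolynomial.support_sum hs
  obtain ⟨n, hn, hmem⟩ := Finset.mem_biUnion.mp h
  have := MvPolynomial.support_monomial_subset hmem
  exact ⟨n, Polynomial.le_natDegree_of_mem_supp n hn, Finset.mem_singleton.mp this⟩

lemma degreeOf_toMv2 {F : Type} [CommSemiring F] (i j : Fin 2) (P : Polynomial F) :
    MvPolynomial.degreeOf j (toMv2 i P) ≤ if i = j then P.natDegree else 0 := by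
  rw [MvPolynomial.degreeOf_le_iff]
  intro s hs
  obtain ⟨n, hn, rfl⟩ := support_toMv2 i P hs
  rcases eq_or_ne i j with rfl | h
  · simpa using hn
  · simp [Finsupp.single_apply, h]

/-- Lagrange interpolation on the Hermitian curve: given values `γ` at each affine point of
the Hermitian curve `β^q + β = α^(q+1)` over the field `F` with `q²` elements, there is a
bivariate polynomial `f` with `deg_x f ≤ q² - 1` and `deg_y f ≤ q - 1` (hence
`deg_{q,q+1} f < q³ + q² - q`) interpolating the values `γ` at the curve points. -/
theorem stmt_3 (p e : ℕ) (hp : p.Prime) (he : 0 < e) (q : ℕ) (hq : q = p ^ e)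
    (F : Type) [Field F] [Fintype F] (hF : Fintype.card F = q ^ 2)
    (γ : F × F → F) :
    ∃ f : MvPolynomial (Fin 2) F,
      MvPolynomial.degreeOf 0 f ≤ q ^ 2 - 1 ∧
      MvPolynomial.degreeOf 1 f ≤ q - 1 ∧
      MvPolynomial.weightedTotalDegree ![q, q + 1] f < q ^ 3 + q ^ 2 - q ∧
      ∀ α β : F, β ^ q + β = α ^ (q + 1) → MvPolynomial.eval ![α, β] f = γ (α, β) := by
  classical
  have hq2 : 2 ≤ q := by
    rw [hq]
    calc 2 = 2^1 := rfl
    _ ≤ p ^ e := Nat.pow_le_pow_left hp.two_le e |>.trans' (Nat.pow_le_pow_right (by norm_num) he)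
  -- the fiber over α
  set S : F → Finset F := fun α => Finset.univ.filter (fun β => β ^ q + β = α ^ (q + 1)) with hS
  have hScard : ∀ α, (S α).card ≤ q := by
    intro α
    set P : Polynomial F := Polynomial.X ^ q + (Polynomial.X - Polynomial.C (α ^ (q + 1))) with hP
    have hdeg : P.natDegree = q := by
      rw [hP, Polynomial.natDegree_add_eq_left_of_natDegree_lt]
      · exact Polynomial.natDegree_X_pow q
      · rw [Polynomial.natDegree_X_sub_C, Polynomial.natDegree_X_pow]; omega
    have hP0 : P ≠ 0 := fun h => by simp [h] at hdeg; omega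
    have := Polynomial.card_le_degree_of_subset_roots (p := P) (Z := S α) ?_
    · omega
    intro β hβ
    rw [Finset.mem_val, hS, Finset.mem_filter] at hβ
    rw [Polynomial.mem_roots hP0]
    simp only [Polynomial.IsRoot, hP, Polynomial.eval_add, Polynomial.eval_sub,
      Polynomial.eval_pow, Polynomial.eval_X, Polynomial.eval_C]
    rw [← hβ.2]; ring
  -- interpolating polynomials
  set g : F → Polynomial F := fun α => Lagrange.interpolate (S α) id (fun β => γ (α, β)) with hg
  have hgdeg : ∀ α, (g α).natDegree ≤ q - 1 := by
    intro α
    refine (Polynomial.natDegree_le_of_degree_le (Lagrange.degree_interpolate_le _ ?_)).trans ?_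
    · exact Set.injOn_id _
    · have := hScard α; omega
  set b : F → Polynomial F := fun α => Lagrange.basis Finset.univ id α with hb
  have hbdeg : ∀ α, (b α).natDegree ≤ q ^ 2 - 1 := by
    intro α
    rw [hb, Lagrange.natDegree_basis (Set.injOn_id _) (Finset.mem_univ α),
      Finset.card_univ, hF]
  set f : MvPolynomial (Fin 2) F := ∑ α : F, toMv2 0 (b α) * toMv2 1 (g α) with hf
  have hd0 : MvPolynomial.degreeOf 0 f ≤ q ^ 2 - 1 := by
    refine (MvPolynomial.degreeOf_sum_le _ _ _).trans (Finset.sup_le fun α _ => ?_)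
    refine (MvPolynomial.degreeOf_mul_le _ _ _).trans ?_
    have h1 : MvPolynomial.degreeOf 0 (toMv2 0 (b α)) ≤ q ^ 2 - 1 :=
      (degreeOf_toMv2 0 0 (b α)).trans (by simpa using hbdeg α)
    have h2 : MvPolynomial.degreeOf 0 (toMv2 1 (g α)) ≤ 0 :=
      (degreeOf_toMv2 1 0 (g α)).trans (by norm_num)
    omega
  have hd1 : MvPolynomial.degreeOf 1 f ≤ q - 1 := by
    refine (MvPolynomial.degreeOf_sum_le _ _ _).trans (Finset.sup_le fun α _ => ?_)
    refine (MvPolynomial.degreeOf_mul_le _ _ _).trans ?_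
    have h1 : MvPolynomial.degreeOf 1 (toMv2 0 (b α)) ≤ 0 :=
      (degreeOf_toMv2 0 1 (b α)).trans (by norm_num)
    have h2 : MvPolynomial.degreeOf 1 (toMv2 1 (g α)) ≤ q - 1 :=
      (degreeOf_toMv2 1 1 (g α)).trans (by simpa using hgdeg α)
    omega
  refine ⟨f, hd0, hd1, ?_, ?_⟩
  · -- weighted total degree
    have e1 : q ≤ q ^ 2 := Nat.le_self_pow (by norm_num) q
    have e5 : q ^ 2 ≤ q ^ 3 := Nat.pow_le_pow_right (by omega) (by omega)
    have e2 : q ^ 2 * q = q ^ 3 := by ring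
    have e3 : (q ^ 2 - 1) * q = q ^ 3 - q := by rw [Nat.sub_mul, one_mul, e2]
    have e4 : (q - 1) * (q + 1) = q ^ 2 - 1 := by
      rw [Nat.sub_mul, one_mul]
      have : q * (q + 1) = q ^ 2 + q := by ring
      omega
    rw [MvPolynomial.weightedTotalDegree]
    have hbot : (⊥ : ℕ) < q ^ 3 + q ^ 2 - q := by
      have e1 : q ≤ q ^ 2 := Nat.le_self_pow (by norm_num) q
      have e5 : q ^ 2 ≤ q ^ 3 := Nat.pow_le_pow_right (by omega) (by omega)
      simp only [bot_eq_zero']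
      omega
    rw [Finset.sup_lt_iff hbot]
    intro s hs
    have h0 : s 0 ≤ q ^ 2 - 1 := by
      refine le_trans ?_ hd0
      rw [MvPolynomial.degreeOf_eq_sup]
      exact Finset.le_sup (f := fun m => m 0) hs
    have h1 : s 1 ≤ q - 1 := by
      refine le_trans ?_ hd1
      rw [MvPolynomial.degreeOf_eq_sup]
      exact Finset.le_sup (f := fun m => m 1) hs
    have hw : Finsupp.weight ![q, q + 1] s = s 0 * q + s 1 * (q + 1) := by
      rw [Finsupp.weight_apply, Finsupp.sum_fintype]
      · rw [Fin.sum_univ_two]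
        simp [smul_eq_mul, mul_comm]
      · intro i; simp
    have hle : s 0 * q + s 1 * (q + 1) ≤ (q ^ 2 - 1) * q + (q - 1) * (q + 1) :=
      Nat.add_le_add (Nat.mul_le_mul_right _ h0) (Nat.mul_le_mul_right _ h1)
    simp only [hw]
    omega
  · intro α β hαβ
    rw [map_sum]
    have hβS : β ∈ S α := by rw [hS]; simp [hαβ]
    rw [Finset.sum_eq_single α]
    · simp only [MvPolynomial.eval_mul, eval_toMv2]
      have h1v : (![α, β] : Fin 2 → F) 0 = α := rfl
      have h2v : (![α, β] : Fin 2 → F) 1 = β := rfl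
      rw [h1v, h2v, hb, hg]
      have hbs := Lagrange.eval_basis_self (v := id) (Set.injOn_id _) (Finset.mem_univ α)
      simp only [id] at hbs
      rw [hbs, one_mul]
      have := Lagrange.eval_interpolate_at_node (v := id) (fun β => γ (α, β))
        (Set.injOn_id _) hβS
      simpa using this
    · intro α' _ hne
      simp only [MvPolynomial.eval_mul, eval_toMv2]
      have h1v : (![α, β] : Fin 2 → F) 0 = α := rfl
      rw [h1v, hb]
      simp only [id] at *
      have h0 := Lagrange.eval_basis_of_ne (v := id) hne (Finset.mem_univ α)
      simp only [id] at h0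
      rw [h0]
      ring
    · intro h; exact absurd (Finset.mem_univ α) h
end

section
/- Let U be a ρ × ρ matrix over K[x] all of whose rows are nonzero and which is in weak Popov form. Then for every nonzero vector b in the K[x]-row space of U, the row u of U with LP(u) = LP(b) satisfies deg u ≤ deg b. -/
open Polynomial

/-- The degree of a vector of polynomials: the maximum of the degrees of its entries. -/
noncomputable def vdeg {K : Type} [Field K] {ρ : ℕ} (v : Fin ρ → K[X]) : WithBot ℕ :=
  Finset.univ.sup fun i => (v i).degree

/-- The leading position of a vector of polynomials: the largest index attaining the
maximal degree. -/
noncomputable def LP {K : Type} [Field K] {ρ : ℕ} [NeZero ρ] (v : Fin ρ → K[X]) : Fin ρ :=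
  (Finset.univ.filter fun i => (v i).degree = vdeg v).max' (by
    obtain ⟨b, -, hb⟩ := Finset.exists_mem_eq_sup (Finset.univ : Finset (Fin ρ))
      Finset.univ_nonempty fun i => (v i).degree
    exact ⟨b, Finset.mem_filter.mpr ⟨Finset.mem_univ b, hb.symm⟩⟩)

/-!
Write `b = ∑ j, c j • u j` and let `j₀` maximise, lexicographically, the pair
`(deg c_j + deg u_j, LP u_j)`, with value `(D, p)`. Since the leading positions of the `u j`
are distinct, `c j₀ * u j₀ p` is the only term of degree `D` in any position `q ≥ p`: every
other term either has smaller `deg c_j + deg u_j`, or has its leading position strictly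
before `q`. Hence `deg b = D` and `LP b = p`, which is the predictable degree property;
the theorem follows since `LP (U i) = LP b` forces `i = j₀`, and `deg U_{j₀} ≤ D`.
-/

section WeakPopov

variable {K : Type} [Field K] {ρ : ℕ}

lemma degree_le_vdeg (v : Fin ρ → K[X]) (q : Fin ρ) : (v q).degree ≤ vdeg v :=
  Finset.le_sup (f := fun i => (v i).degree) (Finset.mem_univ q)

lemma vdeg_le_iff {v : Fin ρ → K[X]} {D : WithBot ℕ} : vdeg v ≤ D ↔ ∀ q, (v q).degree ≤ D := by
  simp [vdeg]

lemma degree_mul_le_degree_add_vdeg (c : K[X]) (v : Fin ρ → K[X]) (q : Fin ρ) :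
    (c * v q).degree ≤ c.degree + vdeg v :=
  (degree_mul_le _ _).trans (add_le_add_right (degree_le_vdeg v q) _)

lemma degree_sum_smul_apply_le {ι : Type*} [Fintype ι] {u : ι → Fin ρ → K[X]} {c : ι → K[X]}
    {D : WithBot ℕ} (h : ∀ j, (c j).degree + vdeg (u j) ≤ D) (q : Fin ρ) :
    ((∑ j, c j • u j) q).degree ≤ D := by
  rw [Finset.sum_apply]
  exact (degree_sum_le _ _).trans
    (Finset.sup_le fun j _ => (degree_mul_le_degree_add_vdeg _ _ _).trans (h j))

variable [NeZero ρ]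

lemma degree_LP (v : Fin ρ → K[X]) : (v (LP v)).degree = vdeg v := by
  unfold LP
  exact (Finset.mem_filter.mp
    (Finset.max'_mem (Finset.univ.filter fun i => (v i).degree = vdeg v) _)).2

lemma le_LP_of_degree_eq {v : Fin ρ → K[X]} {q : Fin ρ} (h : (v q).degree = vdeg v) :
    q ≤ LP v :=
  Finset.le_max' _ _ (Finset.mem_filter.mpr ⟨Finset.mem_univ q, h⟩)

lemma degree_lt_vdeg_of_LP_lt {v : Fin ρ → K[X]} {q : Fin ρ} (h : LP v < q) :
    (v q).degree < vdeg v :=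
  (degree_le_vdeg v q).lt_of_ne fun he => (le_LP_of_degree_eq he).not_gt h

lemma vdeg_eq_and_LP_eq_of_degree {v : Fin ρ → K[X]} {D : WithBot ℕ} {p : Fin ρ}
    (hle : ∀ q, (v q).degree ≤ D) (hp : (v p).degree = D)
    (hlt : ∀ q, p < q → (v q).degree < D) : vdeg v = D ∧ LP v = p := by
  have hvdeg : vdeg v = D := le_antisymm (vdeg_le_iff.mpr hle) (hp ▸ degree_le_vdeg v p)
  refine ⟨hvdeg, le_antisymm ?_ (le_LP_of_degree_eq (hp.trans hvdeg.symm))⟩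
  by_contra! h
  exact (hlt _ h).ne (hvdeg ▸ degree_LP v)

lemma degree_mul_lt_of_LP_lt {c : K[X]} (hc : c ≠ 0) {v : Fin ρ → K[X]} {q : Fin ρ}
    (h : LP v < q) : (c * v q).degree < c.degree + vdeg v := by
  rw [degree_mul]
  exact WithBot.add_lt_add_left (degree_ne_bot.mpr hc) (degree_lt_vdeg_of_LP_lt h)

variable {ι : Type*} [Fintype ι]

lemma vdeg_sum_smul_eq_and_LP_eq_of_isMax (u : ι → Fin ρ → K[X])
    (hu : Function.Injective fun j => LP (u j)) (c : ι → K[X]) {j₀ : ι}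
    (hmax : ∀ j, toLex ((c j).degree + vdeg (u j), LP (u j)) ≤
      toLex ((c j₀).degree + vdeg (u j₀), LP (u j₀)))
    (hD : (c j₀).degree + vdeg (u j₀) ≠ ⊥) :
    vdeg (∑ j, c j • u j) = (c j₀).degree + vdeg (u j₀) ∧
      LP (∑ j, c j • u j) = LP (u j₀) := by
  classical
  set D := (c j₀).degree + vdeg (u j₀)
  set p := LP (u j₀)
  have hsum : ∀ q, (∑ j, c j • u j) q = ∑ j, c j * u j q := fun q => by simp [Finset.sum_apply]
  have hlt : ∀ j q, p ≤ q → (j, q) ≠ (j₀, p) → (c j * u j q).degree < D := by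
    intro j q hpq hne
    rcases Prod.Lex.toLex_le_toLex.mp (hmax j) with hd | ⟨hd, hLP⟩
    · exact (degree_mul_le_degree_add_vdeg _ _ _).trans_lt hd
    · dsimp only at hd hLP
      have hc : c j ≠ 0 := fun h0 => hD (hd ▸ by simp [h0])
      have hLPq : LP (u j) < q := by
        refine lt_of_le_of_ne (hLP.trans hpq) fun heq => hne ?_
        have hq : q = p := le_antisymm (heq ▸ hLP) hpq
        rw [hq, hu (heq.trans hq)]
      exact hd ▸ degree_mul_lt_of_LP_lt hc hLPq
  have hrest : ∀ q, p ≤ q → (∑ j ∈ Finset.univ.erase j₀, c j * u j q).degree < D :=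
    fun q hpq => (degree_sum_le _ _).trans_lt <| (Finset.sup_lt_iff hD.bot_lt).mpr
      fun j hj => hlt j q hpq (by simp [Finset.ne_of_mem_erase hj])
  apply vdeg_eq_and_LP_eq_of_degree
  · exact degree_sum_smul_apply_le fun j => Prod.Lex.monotone_fst _ _ (hmax j)
  · have hlead : (c j₀ * u j₀ p).degree = D := by rw [degree_mul, degree_LP]
    rw [hsum, ← Finset.add_sum_erase _ _ (Finset.mem_univ j₀),
      degree_add_eq_left_of_degree_lt (hlead ▸ hrest p le_rfl), hlead]
  · intro q hpq
    rw [hsum, ← Finset.add_sum_erase _ _ (Finset.mem_univ j₀)]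
    exact (degree_add_le _ _).trans_lt
      (max_lt (hlt j₀ q hpq.le (by simp [hpq.ne'])) (hrest q hpq.le))

theorem exists_vdeg_sum_smul_eq_and_LP_eq (u : ι → Fin ρ → K[X])
    (hu : Function.Injective fun j => LP (u j)) (c : ι → K[X]) (hb : ∑ j, c j • u j ≠ 0) :
    ∃ j₀, c j₀ ≠ 0 ∧ vdeg (∑ j, c j • u j) = (c j₀).degree + vdeg (u j₀) ∧
      LP (∑ j, c j • u j) = LP (u j₀) := by
  obtain ⟨j₀, -, hmax⟩ := Finset.exists_max_image Finset.univ
    (fun j => toLex ((c j).degree + vdeg (u j), LP (u j))) (Finset.nonempty_of_sum_ne_zero hb)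
  replace hmax := fun j => hmax j (Finset.mem_univ j)
  have hmax' : ∀ j, (c j).degree + vdeg (u j) ≤ (c j₀).degree + vdeg (u j₀) :=
    fun j => Prod.Lex.monotone_fst _ _ (hmax j)
  have hD : (c j₀).degree + vdeg (u j₀) ≠ ⊥ := fun hbot =>
    hb (funext fun q => degree_eq_bot.mp (le_bot_iff.mp (hbot ▸ degree_sum_smul_apply_le hmax' q)))
  exact ⟨j₀, fun h0 => hD (by simp [h0]), vdeg_sum_smul_eq_and_LP_eq_of_isMax u hu c hmax hD⟩

end WeakPopov

theorem stmt_4_general {K : Type} [Field K] {ρ : ℕ} [NeZero ρ]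
    (U : Matrix (Fin ρ) (Fin ρ) K[X])
    (hwpf : Function.Injective fun i => LP (U i))
    (b : Fin ρ → K[X]) (hb : b ≠ 0)
    (hmem : b ∈ Submodule.span K[X] (Set.range fun i => U i))
    (i : Fin ρ) (hLP : LP (U i) = LP b) :
    vdeg (U i) ≤ vdeg b := by
  obtain ⟨c, rfl⟩ := (Submodule.mem_span_range_iff_exists_fun K[X]).mp hmem
  obtain ⟨j₀, hc, hdeg, hj₀⟩ := exists_vdeg_sum_smul_eq_and_LP_eq (fun j => U j) hwpf c hb
  obtain rfl : i = j₀ := hwpf (hLP.trans hj₀)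
  rw [hdeg]
  exact le_add_of_nonneg_left (zero_le_degree_iff.mpr hc)

/-- Let `U` be a `ρ × ρ` matrix over `K[x]` all of whose rows are nonzero and which is in
weak Popov form (the leading positions of its rows are pairwise distinct). Then for every
nonzero vector `b` in the `K[x]`-row space of `U`, the row `u` of `U` with `LP u = LP b`
satisfies `deg u ≤ deg b`. -/
theorem stmt_4 {K : Type} [Field K] {ρ : ℕ} [NeZero ρ]
    (U : Matrix (Fin ρ) (Fin ρ) K[X])
    (hrows : ∀ i, U i ≠ 0)
    (hwpf : Function.Injective fun i => LP (U i))
    (b : Fin ρ → K[X]) (hb : b ≠ 0)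
    (hmem : b ∈ Submodule.span K[X] (Set.range fun i => U i))
    (i : Fin ρ) (hLP : LP (U i) = LP b) :
    vdeg (U i) ≤ vdeg b :=
  stmt_4_general U hwpf b hb hmem i hLP
end

section
/- For every nonzero vector v ∈ K[x]^ρ, one has π^{-1}(LP(Ψ_{ν,w}(v))) = LP(Φ_{ν,w}(v)). -/
open Polynomial

/-- The embedding `Φ_{ν,w}(v) = (x^{w_1} v_1(x^ν), …, x^{w_ρ} v_ρ(x^ν))`. -/
noncomputable def PhiMap {K : Type} [Field K] {ρ : ℕ} (ν : ℕ) (w : Fin ρ → ℕ)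
    (v : Fin ρ → K[X]) : Fin ρ → K[X] :=
  fun i => X ^ w i * (v i).comp (X ^ ν)

/-- The embedding `Ψ_{ν,w}(v) = π((x^{⌊w_1/ν⌋} v_1, …, x^{⌊w_ρ/ν⌋} v_ρ))`, where `π`
permutes the positions (the entry originally at position `i` is moved to position `π i`). -/
noncomputable def PsiMap {K : Type} [Field K] {ρ : ℕ} (ν : ℕ) (w : Fin ρ → ℕ)
    (π : Equiv.Perm (Fin ρ)) (v : Fin ρ → K[X]) : Fin ρ → K[X] :=
  fun j => X ^ (w (π.symm j) / ν) * v (π.symm j)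


lemma lex_lt_aux {ν a b r s : ℕ} (hr : r < ν) (hs : s < ν) :
    ν * a + r < ν * b + s ↔ a < b ∨ (a = b ∧ r < s) := by
  constructor
  · intro h
    rcases lt_trichotomy a b with h1 | h1 | h1
    · exact Or.inl h1
    · subst h1; exact Or.inr ⟨rfl, by omega⟩
    · exfalso
      have h2 : ν * (b + 1) ≤ ν * a := Nat.mul_le_mul_left ν h1
      rw [Nat.mul_add, Nat.mul_one] at h2
      omega
  · rintro (h | ⟨rfl, h⟩)
    · have h2 : ν * (a + 1) ≤ ν * b := Nat.mul_le_mul_left ν h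
      rw [Nat.mul_add, Nat.mul_one] at h2
      omega
    · omega

lemma lex_eq_aux {ν a b r s : ℕ} (hr : r < ν) (hs : s < ν) :
    ν * a + r = ν * b + s ↔ a = b ∧ r = s := by
  constructor
  · intro h
    have h1 : ¬ (ν * a + r < ν * b + s) := by omega
    have h2 : ¬ (ν * b + s < ν * a + r) := by omega
    rw [lex_lt_aux hr hs] at h1
    rw [lex_lt_aux hs hr] at h2
    push_neg at h1 h2
    constructor
    · omega
    · rcases Nat.lt_trichotomy a b with h3 | h3 | h3
      · omega
      · subst h3; omega
      · omega
  · rintro ⟨rfl, rfl⟩; rfl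

lemma LP_eq_iff {K : Type} [Field K] {ρ : ℕ} [NeZero ρ] (v : Fin ρ → K[X]) (j : Fin ρ) :
    LP v = j ↔ ∀ k, (v k).degree < (v j).degree ∨ ((v k).degree = (v j).degree ∧ k ≤ j) := by
  constructor
  · rintro rfl
    have hmem := Finset.max'_mem (Finset.univ.filter fun i => (v i).degree = vdeg v)
      (by
        obtain ⟨b, -, hb⟩ := Finset.exists_mem_eq_sup (Finset.univ : Finset (Fin ρ))
          Finset.univ_nonempty fun i => (v i).degree
        exact ⟨b, Finset.mem_filter.mpr ⟨Finset.mem_univ b, hb.symm⟩⟩)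
    rw [Finset.mem_filter] at hmem
    have hLP : (v (LP v)).degree = vdeg v := hmem.2
    intro k
    have hk : (v k).degree ≤ vdeg v := Finset.le_sup (f := fun i => (v i).degree) (Finset.mem_univ k)
    rcases eq_or_lt_of_le hk with h | h
    · refine Or.inr ⟨h.trans hLP.symm, ?_⟩
      exact Finset.le_max' _ k (Finset.mem_filter.mpr ⟨Finset.mem_univ k, h⟩)
    · exact Or.inl (hLP ▸ h)
  · intro h
    have hvd : vdeg v = (v j).degree := by
      refine le_antisymm (Finset.sup_le fun k _ => ?_) (Finset.le_sup (f := fun i => (v i).degree) (Finset.mem_univ j))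
      rcases h k with h' | h'
      · exact h'.le
      · exact h'.1.le
    refine le_antisymm (Finset.max'_le _ _ _ fun i hi => ?_)
      (Finset.le_max' _ j (Finset.mem_filter.mpr ⟨Finset.mem_univ j, hvd.symm⟩))
    rw [Finset.mem_filter] at hi
    rcases h i with h' | h'
    · exact absurd (hi.2.trans hvd) h'.ne
    · exact h'.2

/-- For every nonzero vector `v ∈ K[x]^ρ`, one has `π⁻¹(LP (Ψ_{ν,w} v)) = LP (Φ_{ν,w} v)`,
where `π` is the permutation determined by: `π i > π j` iff `w_i mod ν > w_j mod ν`, or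
`w_i mod ν = w_j mod ν` and `i > j`. -/
theorem stmt_5 {K : Type} [Field K] {ρ : ℕ} [NeZero ρ] (ν : ℕ) (hν : 0 < ν)
    (w : Fin ρ → ℕ) (π : Equiv.Perm (Fin ρ))
    (hπ : ∀ i j : Fin ρ, π j < π i ↔
      (w j % ν < w i % ν ∨ (w i % ν = w j % ν ∧ j < i)))
    (v : Fin ρ → K[X]) (hv : v ≠ 0) :
    π.symm (LP (PsiMap ν w π v)) = LP (PhiMap ν w v) := by
  -- basic nonzeroness and degree facts
  have hXν : (X : K[X]) ^ ν ≠ C (((X : K[X]) ^ ν).coeff 0) := by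
    intro h
    have := congrArg natDegree h
    rw [natDegree_X_pow, natDegree_C] at this
    omega
  have hcomp_ne : ∀ i, v i ≠ 0 → (v i).comp (X ^ ν) ≠ 0 := by
    intro i hi h
    rcases comp_eq_zero_iff.mp h with h' | h'
    · exact hi h'
    · exact hXν h'.2
  have hPhi_zero : ∀ i, PhiMap ν w v i = 0 ↔ v i = 0 := by
    intro i
    constructor
    · intro h
      by_contra hi
      exact (mul_ne_zero (pow_ne_zero _ X_ne_zero) (hcomp_ne i hi)) h
    · intro h; simp [PhiMap, h]
  have hPsi_zero : ∀ i, PsiMap ν w π v (π i) = 0 ↔ v i = 0 := by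
    intro i
    simp only [PsiMap, Equiv.symm_apply_apply]
    constructor
    · intro h
      rcases mul_eq_zero.mp h with h | h
      · exact absurd h (pow_ne_zero _ X_ne_zero)
      · exact h
    · intro h; simp [h]
  have hPhi_deg : ∀ i, v i ≠ 0 →
      (PhiMap ν w v i).degree = ((w i + ν * (v i).natDegree : ℕ) : WithBot ℕ) := by
    intro i hi
    have h1 : (PhiMap ν w v i) ≠ 0 := fun h => hi ((hPhi_zero i).mp h)
    rw [degree_eq_natDegree h1]
    congr 1
    simp only [PhiMap]
    rw [natDegree_mul (pow_ne_zero _ X_ne_zero) (hcomp_ne i hi), natDegree_X_pow,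
      natDegree_comp, natDegree_X_pow, mul_comm]
  have hPsi_deg : ∀ i, v i ≠ 0 →
      (PsiMap ν w π v (π i)).degree = ((w i / ν + (v i).natDegree : ℕ) : WithBot ℕ) := by
    intro i hi
    have h1 : PsiMap ν w π v (π i) ≠ 0 := fun h => hi ((hPsi_zero i).mp h)
    rw [degree_eq_natDegree h1]
    congr 1
    simp only [PsiMap, Equiv.symm_apply_apply]
    rw [natDegree_mul (pow_ne_zero _ X_ne_zero) hi, natDegree_X_pow]
  set j := LP (PhiMap ν w v) with hj
  have hchar := (LP_eq_iff (PhiMap ν w v) j).mp rfl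
  -- v j ≠ 0
  have hvj : v j ≠ 0 := by
    intro h0
    obtain ⟨i, hi⟩ : ∃ i, v i ≠ 0 := by
      by_contra h
      push_neg at h
      exact hv (funext h)
    rcases hchar i with h' | h'
    · rw [(hPhi_zero j).mpr h0, degree_zero] at h'
      exact absurd h' (by simp)
    · rw [(hPhi_zero j).mpr h0, degree_zero, degree_eq_bot, hPhi_zero] at h'
      exact hi h'.1
  -- show LP Psi = π j
  have key : LP (PsiMap ν w π v) = π j := by
    rw [LP_eq_iff]
    intro k'
    obtain ⟨k, rfl⟩ : ∃ k, k' = π k := ⟨π.symm k', (π.apply_symm_apply k').symm⟩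
    have hrk : w k % ν < ν := Nat.mod_lt _ hν
    have hrj : w j % ν < ν := Nat.mod_lt _ hν
    by_cases hvk : v k = 0
    · left
      rw [(hPsi_zero k).mpr hvk, degree_zero, hPsi_deg j hvj]
      exact WithBot.bot_lt_coe _
    · have hΦ := hchar k
      rw [hPhi_deg k hvk, hPhi_deg j hvj] at hΦ
      rw [hPsi_deg k hvk, hPsi_deg j hvj]
      have hwk : ν * (w k / ν) + w k % ν = w k := Nat.div_add_mod _ _
      have hwj : ν * (w j / ν) + w j % ν = w j := Nat.div_add_mod _ _
      have ek : w k + ν * (v k).natDegree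
          = ν * (w k / ν + (v k).natDegree) + w k % ν := by
        rw [Nat.mul_add]; omega
      have ej : w j + ν * (v j).natDegree
          = ν * (w j / ν + (v j).natDegree) + w j % ν := by
        rw [Nat.mul_add]; omega
      rcases hΦ with h | ⟨h, hkj⟩
      · have h' : w k + ν * (v k).natDegree < w j + ν * (v j).natDegree := by
          exact_mod_cast h
        rw [ek, ej, lex_lt_aux hrk hrj] at h'
        rcases h' with h' | ⟨h', hr⟩
        · left; exact_mod_cast h'
        · right
          refine ⟨by exact_mod_cast h', ?_⟩
          exact le_of_lt ((hπ j k).mpr (Or.inl hr))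
      · have h' : w k + ν * (v k).natDegree = w j + ν * (v j).natDegree := by
          exact_mod_cast h
        rw [ek, ej, lex_eq_aux hrk hrj] at h'
        right
        refine ⟨by exact_mod_cast h'.1, ?_⟩
        rcases eq_or_lt_of_le hkj with rfl | hkj
        · exact le_refl _
        · exact le_of_lt ((hπ j k).mpr (Or.inr ⟨h'.2.symm, hkj⟩))
  rw [key, Equiv.symm_apply_apply]
end

section
/- Let E be any set of points of the Hermitian curve. Then: (a) there exists a nonzero polynomial p ∈ F[x, y] with deg_y p ≤ q − 1 that vanishes at every point of E and satisfies deg_{q,q+1}(p) ≤ |E| + g; and (b) every nonzero polynomial p ∈ F[x, y] with deg_y p ≤ q − 1 that vanishes at every point of E satisfies deg_{q,q+1}(p) ≥ |E|. In particular, the minimal weighted degree Λ-polynomial vanishing on E has weighted degree between |E| and |E| + g. -/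
/-!
Monomials `x^i y^j` with `j < q` have pairwise distinct weights `q i + (q + 1) j`, and these
weights form the semigroup `⟨q, q + 1⟩`, which misses exactly `g = q (q - 1) / 2` numbers.

(a) At least `|E| + 1` such monomials have weight `≤ |E| + g`, so a nonzero combination of them
vanishes on `E`.

(b) Polynomials of `y`-degree `< q` separate the points of `E`, so their values span `F^E`.
If `Λ` has leading weight `D`, the reductions modulo `y^q + y - x^(q+1)` of the multiples
`x^i y^j Λ` vanish on `E` and have leading weights running through `D + ⟨q, q + 1⟩`. Together
with the monomials of the other weights they span these polynomials triangularly, so `F^E` is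
spanned by the values of the monomials with weight in `⟨q, q + 1⟩ \ (D + ⟨q, q + 1⟩)`, a set of
`D` numbers.
-/

namespace HermitianCurve

open Finset

/-- The semigroup `⟨q, q + 1⟩` of pole orders at infinity: writing `s = r + q k` with `r < q`,
it contains `s` iff `r ≤ k`. -/
def IsPoleNumber (q s : ℕ) : Prop := s % q ≤ s / q

instance (q : ℕ) : DecidablePred (IsPoleNumber q) :=
  fun _ => inferInstanceAs (Decidable (_ ≤ _))

variable {q : ℕ}

lemma isPoleNumber_add_mul_iff (hq : 0 < q) {r : ℕ} (hr : r < q) (k : ℕ) :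
    IsPoleNumber q (r + q * k) ↔ r ≤ k := by
  rw [IsPoleNumber, Nat.add_mul_mod_self_left, Nat.add_mul_div_left _ _ hq, Nat.mod_eq_of_lt hr,
    Nat.div_eq_of_lt hr, zero_add]

lemma IsPoleNumber.add (hq : 0 < q) {a b : ℕ} (ha : IsPoleNumber q a) (hb : IsPoleNumber q b) :
    IsPoleNumber q (a + b) := by
  have hr := Nat.mod_lt a hq
  have hr' := Nat.mod_lt b hq
  have ha' := Nat.mod_add_div a q
  have hb' := Nat.mod_add_div b q
  unfold IsPoleNumber at ha hb
  rcases lt_or_ge (a % q + b % q) q with h | h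
  · have : a + b = (a % q + b % q) + q * (a / q + b / q) := by rw [mul_add]; omega
    rw [this, isPoleNumber_add_mul_iff hq h]
    omega
  · have : a + b = (a % q + b % q - q) + q * (a / q + b / q + 1) := by
      rw [mul_add, mul_add, mul_one]; omega
    rw [this, isPoleNumber_add_mul_iff hq (by omega)]
    omega

lemma isPoleNumber_of_le (hq : 0 < q) {s : ℕ} (hs : q * q ≤ s + 1) : IsPoleNumber q s := by
  have h := Nat.mod_add_div s q
  have hr := Nat.mod_lt s hq
  unfold IsPoleNumber
  by_contra! hlt
  have : q * (s / q + 1) ≤ q * (q - 1) := Nat.mul_le_mul_left q (by omega)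
  rw [Nat.mul_sub, mul_one, mul_add, mul_one] at this
  omega

def gaps (q : ℕ) : Finset ℕ :=
  (range q).biUnion fun r => (range r).image (r + q * ·)

lemma not_isPoleNumber_iff (hq : 0 < q) {s : ℕ} : ¬ IsPoleNumber q s ↔ s ∈ gaps q := by
  have h := Nat.mod_add_div s q
  have hr := Nat.mod_lt s hq
  simp only [gaps, mem_biUnion, mem_range, mem_image]
  constructor
  · intro hs
    exact ⟨s % q, hr, s / q, by unfold IsPoleNumber at hs; omega, h⟩
  · rintro ⟨r, hrq, k, hk, rfl⟩
    rw [isPoleNumber_add_mul_iff hq hrq]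
    omega

lemma lt_of_mem_gaps {s : ℕ} (hs : s ∈ gaps q) : s < q * q := by
  simp only [gaps, mem_biUnion, mem_range, mem_image] at hs
  obtain ⟨r, hr, k, hk, rfl⟩ := hs
  have : q * k ≤ q * (q - 1) := Nat.mul_le_mul_left q (by omega)
  rw [Nat.mul_sub, mul_one] at this
  have : q ≤ q * q := Nat.le_mul_self q
  omega

lemma card_gaps (hq : 0 < q) : #(gaps q) = q * (q - 1) / 2 := by
  rw [gaps, card_biUnion]
  · rw [← sum_range_id]
    refine sum_congr rfl fun r _ => ?_
    rw [card_image_of_injective _ fun k k' h =>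
      Nat.eq_of_mul_eq_mul_left hq (Nat.add_left_cancel h), card_range]
  · intro r hr r' hr' hrr'
    simp only [coe_range, Set.mem_Iio] at hr hr'
    simp only [disjoint_left, mem_image, mem_range]
    rintro _ ⟨k, -, rfl⟩ ⟨k', -, h⟩
    have := congrArg (· % q) h
    simp only [Nat.add_mul_mod_self_left, Nat.mod_eq_of_lt hr, Nat.mod_eq_of_lt hr'] at this
    exact hrr' this.symm

lemma card_filter_not_isPoleNumber_le (hq : 0 < q) (n : ℕ) :
    #((range n).filter fun s => ¬ IsPoleNumber q s) ≤ q * (q - 1) / 2 := by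
  rw [← card_gaps hq]
  exact card_le_card fun s hs => (not_isPoleNumber_iff hq).1 (mem_filter.1 hs).2

lemma card_filter_not_isPoleNumber (hq : 0 < q) {n : ℕ} (hn : q * q ≤ n) :
    #((range n).filter fun s => ¬ IsPoleNumber q s) = q * (q - 1) / 2 := by
  rw [← card_gaps hq]
  congr 1
  ext s
  rw [mem_filter, mem_range, not_isPoleNumber_iff hq]
  exact ⟨And.right, fun hs => ⟨(lt_of_mem_gaps hs).trans_le hn, hs⟩⟩

lemma card_filter_isPoleNumber_not_translate_le (hq : 0 < q) {D : ℕ} (hD : IsPoleNumber q D) :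
    #((range (D + q * q)).filter fun s => IsPoleNumber q s ∧ ¬ (D ≤ s ∧ IsPoleNumber q (s - D)))
      ≤ D := by
  -- below `D + q²` lie `D + q² - g` pole numbers, `q² - g` of them in `D + ⟨q, q + 1⟩`
  have hall := card_filter_add_card_filter_not (s := range (D + q * q)) (p := IsPoleNumber q)
  have hsmall := card_filter_add_card_filter_not (s := range (q * q)) (p := IsPoleNumber q)
  rw [card_filter_not_isPoleNumber hq (by omega), card_range] at hall
  rw [card_filter_not_isPoleNumber hq le_rfl, card_range] at hsmall
  have hsplit := card_filter_add_card_filter_not (s := (range (D + q * q)).filter (IsPoleNumber q))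
    (p := fun s => D ≤ s ∧ IsPoleNumber q (s - D))
  have htranslate : ((range (q * q)).filter (IsPoleNumber q)).image (· + D) ⊆
      ((range (D + q * q)).filter (IsPoleNumber q)).filter
        fun s => D ≤ s ∧ IsPoleNumber q (s - D) := by
    simp only [subset_iff, mem_image, mem_filter, mem_range]
    rintro _ ⟨t, ⟨ht, htS⟩, rfl⟩
    exact ⟨⟨by omega, htS.add hq hD⟩, by omega, by simpa using htS⟩
  have := card_le_card htranslate
  rw [card_image_of_injective _ (add_left_injective D)] at this
  rw [← filter_filter]
  omega

noncomputable def exponent (i j : ℕ) : Fin 2 →₀ ℕ := Finsupp.single 0 i + Finsupp.single 1 j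

@[simp] lemma exponent_apply_zero (i j : ℕ) : exponent i j 0 = i := by simp [exponent]

@[simp] lemma exponent_apply_one (i j : ℕ) : exponent i j 1 = j := by simp [exponent]

variable (q) in
noncomputable def weight : (Fin 2 →₀ ℕ) →+ ℕ := Finsupp.weight ![q, q + 1]

lemma weight_apply (d : Fin 2 →₀ ℕ) : weight q d = q * d 0 + (q + 1) * d 1 := by
  simp [weight, Finsupp.weight_eq_sum, Fin.sum_univ_two, mul_comm]

/-- The exponent of `y`-degree below `q` of weight `s`, when `s` is a pole number: the monomial
`x^i y^j` with `j < q` has weight `j + q (i + j)`. -/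
noncomputable def reducedExponent (q s : ℕ) : Fin 2 →₀ ℕ := exponent (s / q - s % q) (s % q)

lemma reducedExponent_apply_one_lt (hq : 0 < q) (s : ℕ) : reducedExponent q s 1 < q := by
  simpa [reducedExponent] using Nat.mod_lt s hq

lemma weight_reducedExponent {s : ℕ} (hs : IsPoleNumber q s) :
    weight q (reducedExponent q s) = s := by
  obtain ⟨k, hk⟩ := Nat.exists_eq_add_of_le hs
  have h := Nat.mod_add_div s q
  rw [weight_apply, reducedExponent, exponent_apply_zero, exponent_apply_one, hk,
    Nat.add_sub_cancel_left]
  rw [hk] at h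
  linarith

lemma weight_eq_add_mul (d : Fin 2 →₀ ℕ) : weight q d = d 1 + q * (d 0 + d 1) := by
  rw [weight_apply]; ring

lemma isPoleNumber_weight (hq : 0 < q) {d : Fin 2 →₀ ℕ} (hd : d 1 < q) :
    IsPoleNumber q (weight q d) := by
  rw [weight_eq_add_mul, isPoleNumber_add_mul_iff hq hd]
  omega

lemma reducedExponent_weight (hq : 0 < q) {d : Fin 2 →₀ ℕ} (hd : d 1 < q) :
    reducedExponent q (weight q d) = d := by
  ext i
  fin_cases i <;>
    simp [reducedExponent, weight_eq_add_mul, Nat.add_mul_mod_self_left,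
      Nat.add_mul_div_left _ _ hq, Nat.mod_eq_of_lt hd, Nat.div_eq_of_lt hd]

open MvPolynomial

noncomputable def reducedBelow (R : Type*) [CommSemiring R] (q n : ℕ) :
    Submodule R (MvPolynomial (Fin 2) R) :=
  restrictSupport R {d | d 1 < q ∧ weight q d < n}

variable {R : Type*} [CommRing R]

lemma weightedTotalDegree_eq_sup_weight (P : MvPolynomial (Fin 2) R) :
    weightedTotalDegree ![q, q + 1] P = P.support.sup (weight q) :=
  rfl

lemma mem_reducedBelow_iff {n : ℕ} {P : MvPolynomial (Fin 2) R} :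
    P ∈ reducedBelow R q n ↔ ∀ d ∈ P.support, d 1 < q ∧ weight q d < n :=
  Iff.rfl

lemma reducedBelow_mono {m n : ℕ} (h : m ≤ n) : reducedBelow R q m ≤ reducedBelow R q n :=
  restrictSupport_mono R fun _ hd => ⟨hd.1, hd.2.trans_le h⟩

lemma mem_reducedBelow_succ_iff (hq : 0 < q) {n : ℕ} {P : MvPolynomial (Fin 2) R} :
    P ∈ reducedBelow R q (n + 1) ↔
      degreeOf 1 P < q ∧ weightedTotalDegree ![q, q + 1] P ≤ n := by
  simp only [mem_reducedBelow_iff, degreeOf_lt_iff hq, weightedTotalDegree_eq_sup_weight,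
    Finset.sup_le_iff, Nat.lt_succ_iff, ← forall_and]

lemma coeff_eq_zero_of_mem_reducedBelow {n : ℕ} {P : MvPolynomial (Fin 2) R}
    (hP : P ∈ reducedBelow R q n) {d : Fin 2 →₀ ℕ} (hd : n ≤ weight q d) : coeff d P = 0 :=
  notMem_support_iff.1 fun h => (mem_reducedBelow_iff.1 hP d h).2.not_ge hd

lemma isPoleNumber_weightedTotalDegree (hq : 0 < q) {P : MvPolynomial (Fin 2) R} (hP0 : P ≠ 0)
    (hP : degreeOf 1 P < q) :
    IsPoleNumber q (weightedTotalDegree ![q, q + 1] P) ∧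
      coeff (reducedExponent q (weightedTotalDegree ![q, q + 1] P)) P ≠ 0 := by
  obtain ⟨d, hd, hsup⟩ := exists_mem_eq_sup P.support (support_nonempty.2 hP0) (weight q)
  have hd1 : d 1 < q := (degreeOf_lt_iff hq).1 hP d hd
  rw [weightedTotalDegree_eq_sup_weight, hsup, reducedExponent_weight hq hd1]
  exact ⟨isPoleNumber_weight hq hd1, mem_support_iff.1 hd⟩

lemma mem_reducedBelow_of_coeff_eq_zero (hq : 0 < q) {n : ℕ} {P : MvPolynomial (Fin 2) R}
    (hP : P ∈ reducedBelow R q (n + 1))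
    (hcoeff : IsPoleNumber q n → coeff (reducedExponent q n) P = 0) : P ∈ reducedBelow R q n := by
  rw [mem_reducedBelow_iff] at hP ⊢
  intro d hd
  obtain ⟨hd1, hdw⟩ := hP d hd
  refine ⟨hd1, lt_of_le_of_ne (by omega) fun hw => ?_⟩
  rw [← hw, reducedExponent_weight hq hd1] at hcoeff
  exact mem_support_iff.1 hd (hcoeff (isPoleNumber_weight hq hd1))

lemma reducedBelow_le_span (hq : 0 < q) {g : ℕ → MvPolynomial (Fin 2) R}
    (hg : ∀ s, IsPoleNumber q s →
      g s ∈ reducedBelow R q (s + 1) ∧ coeff (reducedExponent q s) (g s) = 1) (n : ℕ) :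
    reducedBelow R q n ≤ Submodule.span R (g '' {s | IsPoleNumber q s ∧ s < n}) := by
  induction n with
  | zero =>
    intro P hP
    have : P = 0 := support_eq_empty.1 <| eq_empty_of_forall_notMem fun d hd =>
      (mem_reducedBelow_iff.1 hP d hd).2.not_ge (Nat.zero_le _)
    simp [this]
  | succ n ih =>
    have hmono : Submodule.span R (g '' {s | IsPoleNumber q s ∧ s < n}) ≤
        Submodule.span R (g '' {s | IsPoleNumber q s ∧ s < n + 1}) :=
      Submodule.span_mono <| Set.image_mono fun _ hs => ⟨hs.1, Nat.lt_succ_of_lt hs.2⟩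
    intro P hP
    by_cases hn : IsPoleNumber q n
    · set c := coeff (reducedExponent q n) P
      have hgn := hg n hn
      have hP' : P - c • g n ∈ reducedBelow R q n := by
        refine mem_reducedBelow_of_coeff_eq_zero hq (sub_mem hP (Submodule.smul_mem _ c hgn.1))
          fun _ => ?_
        rw [coeff_sub, coeff_smul, hgn.2, smul_eq_mul, mul_one, sub_self]
      rw [← sub_add_cancel P (c • g n)]
      exact add_mem (hmono (ih hP'))
        (Submodule.smul_mem _ c (Submodule.subset_span ⟨n, ⟨hn, by omega⟩, rfl⟩))
    · exact hmono (ih (mem_reducedBelow_of_coeff_eq_zero hq hP fun h => absurd h hn))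

lemma weight_exponent (i j : ℕ) : weight q (exponent i j) = q * i + (q + 1) * j := by
  rw [weight_apply, exponent_apply_zero, exponent_apply_one]

lemma eval_monomial_fin_two (α β c : R) (d : Fin 2 →₀ ℕ) :
    eval ![α, β] (monomial d c) = c * α ^ d 0 * β ^ d 1 := by
  rw [eval_monomial, Finsupp.prod_fintype _ _ fun _ => pow_zero _, Fin.prod_univ_two]
  simp [mul_assoc]

variable (q) in
/-- On the curve, `y^j = x^(q+1) y^(j-q) - y^(j-q+1)` for `j ≥ q`. -/
noncomputable def reduceMonomial (d : Fin 2 →₀ ℕ) (c : R) : MvPolynomial (Fin 2) R :=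
  if d 1 < q then monomial d c
  else
    monomial (exponent (d 0 + (q + 1)) (d 1 - q)) c - monomial (exponent (d 0) (d 1 + 1 - q)) c

lemma eval_reduceMonomial {α β : R} (h : β ^ q + β = α ^ (q + 1)) (d : Fin 2 →₀ ℕ) (c : R) :
    eval ![α, β] (reduceMonomial q d c) = eval ![α, β] (monomial d c) := by
  unfold reduceMonomial
  split_ifs with hd
  · rfl
  obtain ⟨k, hk⟩ := Nat.exists_eq_add_of_le (not_lt.1 hd)
  simp only [map_sub, eval_monomial_fin_two, exponent_apply_zero, exponent_apply_one, hk,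
    Nat.add_sub_cancel_left, show q + k + 1 - q = k + 1 by omega, pow_add, ← h]
  ring

lemma reduceMonomial_mem (hq : 2 ≤ q) {d : Fin 2 →₀ ℕ} (hd : d 1 < 2 * q - 1) (c : R) :
    reduceMonomial q d c ∈ reducedBelow R q (weight q d + 1) := by
  unfold reduceMonomial
  split_ifs with hdq
  · exact (monomial_mem_restrictSupport R).2 (Or.inl ⟨hdq, Nat.lt_succ_self _⟩)
  obtain ⟨k, hk⟩ := Nat.exists_eq_add_of_le (not_lt.1 hdq)
  refine sub_mem ((monomial_mem_restrictSupport R).2 (Or.inl ⟨?_, ?_⟩))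
    ((monomial_mem_restrictSupport R).2 (Or.inl ⟨?_, ?_⟩)) <;>
  simp only [exponent_apply_zero, exponent_apply_one, weight_apply, hk, Nat.add_sub_cancel_left,
    show q + k + 1 - q = k + 1 by omega] <;>
  first | omega | nlinarith

lemma coeff_reduceMonomial (hq : 2 ≤ q) {d : Fin 2 →₀ ℕ} (hd : d 1 < 2 * q - 1) (c : R) :
    coeff (reducedExponent q (weight q d)) (reduceMonomial q d c) = c := by
  unfold reduceMonomial
  split_ifs with hdq
  · rw [reducedExponent_weight (by omega) hdq, coeff_monomial, if_pos rfl]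
  obtain ⟨k, hk⟩ := Nat.exists_eq_add_of_le (not_lt.1 hdq)
  have hw : weight q d = weight q (exponent (d 0 + (q + 1)) (d 1 - q)) := by
    rw [weight_exponent, weight_apply, hk, Nat.add_sub_cancel_left]; ring
  rw [hw, reducedExponent_weight (by omega) (by simp; omega), coeff_sub, coeff_monomial,
    coeff_monomial, if_pos rfl, if_neg, sub_zero]
  intro h
  have := congrArg (· 1) h
  simp only [exponent_apply_one] at this
  omega

variable (q) in
noncomputable def reducedMul (P : MvPolynomial (Fin 2) R) (μ : Fin 2 →₀ ℕ) :
    MvPolynomial (Fin 2) R :=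
  ∑ d ∈ P.support, reduceMonomial q (d + μ) (coeff d P)

lemma eval_reducedMul {α β : R} (h : β ^ q + β = α ^ (q + 1)) (P : MvPolynomial (Fin 2) R)
    (μ : Fin 2 →₀ ℕ) :
    eval ![α, β] (reducedMul q P μ) = eval ![α, β] P * eval ![α, β] (monomial μ 1) := by
  conv_rhs => rw [← map_mul, P.as_sum, Finset.sum_mul]
  simp only [reducedMul, map_sum, eval_reduceMonomial h, monomial_mul, mul_one]

lemma reducedMul_mem (hq : 2 ≤ q) {n : ℕ} {P : MvPolynomial (Fin 2) R}
    (hP : P ∈ reducedBelow R q n) {μ : Fin 2 →₀ ℕ} (hμ : μ 1 < q) :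
    reducedMul q P μ ∈ reducedBelow R q (n + weight q μ) := by
  refine sum_mem fun d hd => ?_
  obtain ⟨hd1, hdw⟩ := mem_reducedBelow_iff.1 hP d hd
  refine reducedBelow_mono ?_ (reduceMonomial_mem hq (by simp; omega) _)
  rw [map_add]
  omega

lemma coeff_reducedMul (hq : 2 ≤ q) {D : ℕ} (hD : IsPoleNumber q D) {P : MvPolynomial (Fin 2) R}
    (hP : P ∈ reducedBelow R q (D + 1)) {μ : Fin 2 →₀ ℕ} (hμ : μ 1 < q) :
    coeff (reducedExponent q (D + weight q μ)) (reducedMul q P μ) =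
      coeff (reducedExponent q D) P := by
  have hq0 : 0 < q := by omega
  have hDμ : IsPoleNumber q (D + weight q μ) := hD.add hq0 (isPoleNumber_weight hq0 hμ)
  have hbound : ∀ d : Fin 2 →₀ ℕ, d 1 < q → (d + μ) 1 < 2 * q - 1 := fun d hd => by
    simp only [Finsupp.add_apply]
    omega
  rw [reducedMul, coeff_sum, sum_eq_single (reducedExponent q D)]
  · have := coeff_reduceMonomial hq (hbound _ (reducedExponent_apply_one_lt hq0 D))
      (coeff (reducedExponent q D) P)
    rwa [map_add, weight_reducedExponent hD] at this
  · intro d hd hne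
    obtain ⟨hd1, hdw⟩ := mem_reducedBelow_iff.1 hP d hd
    have hlt : weight q d < D := lt_of_le_of_ne (by omega) fun h =>
      hne (h ▸ (reducedExponent_weight hq0 hd1).symm)
    refine coeff_eq_zero_of_mem_reducedBelow (reduceMonomial_mem hq (hbound d hd1) _) ?_
    rw [weight_reducedExponent hDμ, map_add]
    omega
  · intro h
    simp [notMem_support_iff.1 h, reduceMonomial]

variable {F : Type*} [Field F]

lemma finrank_reducedBelow (hq : 0 < q) (n : ℕ) :
    Module.finrank F (reducedBelow F q n) = #((range n).filter (IsPoleNumber q)) := by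
  have hset : {d : Fin 2 →₀ ℕ | d 1 < q ∧ weight q d < n} =
      ↑(((range n).filter (IsPoleNumber q)).image (reducedExponent q)) := by
    ext d
    simp only [Set.mem_ofPred_eq, coe_image, coe_filter, mem_range, Set.mem_image]
    constructor
    · rintro ⟨hd, hw⟩
      exact ⟨weight q d, ⟨hw, isPoleNumber_weight hq hd⟩, reducedExponent_weight hq hd⟩
    · rintro ⟨s, ⟨hs, hsS⟩, rfl⟩
      exact ⟨reducedExponent_apply_one_lt hq s, (weight_reducedExponent hsS).trans_lt hs⟩
  rw [reducedBelow, hset, Module.finrank_eq_nat_card_basis (basisRestrictSupport F _),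
    Nat.card_coe_set_eq, Set.ncard_coe_finset, card_image_of_injOn]
  intro s hs t ht hst
  rw [← weight_reducedExponent (mem_filter.1 hs).2, ← weight_reducedExponent (mem_filter.1 ht).2,
    hst]

noncomputable def evalOn (s : Finset (F × F)) : MvPolynomial (Fin 2) F →ₗ[F] (s → F) :=
  LinearMap.pi fun x => (aeval ![x.1.1, x.1.2]).toLinearMap

@[simp]
lemma evalOn_apply (s : Finset (F × F)) (P : MvPolynomial (Fin 2) F) (x : s) :
    evalOn s P x = eval ![x.1.1, x.1.2] P := by
  simp [evalOn]

variable (q) in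
noncomputable def spanningPoly (Λ : MvPolynomial (Fin 2) F) (D s : ℕ) : MvPolynomial (Fin 2) F :=
  if D ≤ s ∧ IsPoleNumber q (s - D) then
    (coeff (reducedExponent q D) Λ)⁻¹ • reducedMul q Λ (reducedExponent q (s - D))
  else monomial (reducedExponent q s) 1

lemma spanningPoly_spec (hq : 2 ≤ q) {Λ : MvPolynomial (Fin 2) F} {D : ℕ} (hD : IsPoleNumber q D)
    (hΛ : Λ ∈ reducedBelow F q (D + 1)) (hlead : coeff (reducedExponent q D) Λ ≠ 0) {s : ℕ}
    (hs : IsPoleNumber q s) :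
    spanningPoly q Λ D s ∈ reducedBelow F q (s + 1) ∧
      coeff (reducedExponent q s) (spanningPoly q Λ D s) = 1 := by
  have hq0 : 0 < q := by omega
  unfold spanningPoly
  split_ifs with h
  · obtain ⟨hDs, hsD⟩ := h
    have hμ := reducedExponent_apply_one_lt hq0 (s - D)
    have hw : D + weight q (reducedExponent q (s - D)) = s := by
      rw [weight_reducedExponent hsD]; omega
    have hmem := reducedMul_mem hq hΛ hμ
    have hcoeff := coeff_reducedMul hq hD hΛ hμ
    rw [add_right_comm, hw] at hmem
    rw [hw] at hcoeff
    refine ⟨Submodule.smul_mem _ _ hmem, ?_⟩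
    rw [coeff_smul, hcoeff, smul_eq_mul, inv_mul_cancel₀ hlead]
  · refine ⟨(monomial_mem_restrictSupport F).2 (Or.inl ⟨reducedExponent_apply_one_lt hq0 s, ?_⟩),
      by rw [coeff_monomial, if_pos rfl]⟩
    rw [weight_reducedExponent hs]
    exact Nat.lt_succ_self s

lemma evalOn_spanningPoly_eq_zero {s : Finset (F × F)} (hs : ∀ x ∈ s, x.2 ^ q + x.2 = x.1 ^ (q + 1))
    {Λ : MvPolynomial (Fin 2) F} (hvan : ∀ x ∈ s, eval ![x.1, x.2] Λ = 0) {D t : ℕ}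
    (ht : D ≤ t ∧ IsPoleNumber q (t - D)) : evalOn s (spanningPoly q Λ D t) = 0 := by
  simp only [spanningPoly, if_pos ht, map_smul]
  ext x
  simp [eval_reducedMul (hs _ x.2), hvan _ x.2]

lemma card_le_of_mem_curve (hq : 2 ≤ q) (a : F) {B : Finset F}
    (hB : ∀ b ∈ B, b ^ q + b = a ^ (q + 1)) : #B ≤ q := by
  set p : Polynomial F := .X ^ q + (.X - .C (a ^ (q + 1)))
  have hlow : (Polynomial.X - Polynomial.C (a ^ (q + 1))).degree < (q : WithBot ℕ) := by
    rw [Polynomial.degree_X_sub_C]; exact_mod_cast (by omega : 1 < q)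
  have hp : p ≠ 0 := (Polynomial.monic_X_pow_add hlow).ne_zero
  have hdeg : p.natDegree = q := by
    rw [Polynomial.natDegree_add_eq_left_of_degree_lt (by rwa [Polynomial.degree_X_pow]),
      Polynomial.natDegree_X_pow]
  refine hdeg ▸ Polynomial.card_le_degree_of_subset_roots fun b hb => ?_
  rw [Polynomial.mem_roots hp, Polynomial.IsRoot, Polynomial.eval_add, Polynomial.eval_sub,
    Polynomial.eval_pow, Polynomial.eval_X, Polynomial.eval_C, ← hB b hb]
  ring

lemma degreeOf_C_mul_X_sub_C_le (c a : F) (i j : Fin 2) :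
    degreeOf i (C c * (X j - C a)) ≤ if j = i then 1 else 0 := by
  refine (degreeOf_C_mul_le _ _ _).trans ((degreeOf_sub_le _ _ _).trans ?_)
  rw [degreeOf_X, degreeOf_C, max_eq_left (Nat.zero_le _)]
  split_ifs <;> omega

lemma exists_reduced_indicator (hq : 2 ≤ q) {s : Finset (F × F)}
    (hs : ∀ x ∈ s, x.2 ^ q + x.2 = x.1 ^ (q + 1)) {x : F × F} (hx : x ∈ s) :
    ∃ P : MvPolynomial (Fin 2) F, degreeOf 1 P < q ∧ eval ![x.1, x.2] P = 1 ∧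
      ∀ y ∈ s, y ≠ x → eval ![y.1, y.2] P = 0 := by
  classical
  set A := (s.image Prod.fst).erase x.1
  set fiber := (s.filter fun y => y.1 = x.1).image Prod.snd
  set B := fiber.erase x.2
  have hfiber : #fiber ≤ q := card_le_of_mem_curve hq x.1 fun b hb => by
    obtain ⟨y, hy, rfl⟩ := mem_image.1 hb
    rw [← (mem_filter.1 hy).2]
    exact hs y (mem_filter.1 hy).1
  have hx2 : x.2 ∈ fiber := mem_image_of_mem Prod.snd (mem_filter.2 ⟨hx, rfl⟩)
  have hB : #B < q := by
    rw [card_erase_of_mem hx2]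
    omega
  refine ⟨(∏ a ∈ A, C (x.1 - a)⁻¹ * (X 0 - C a)) * ∏ b ∈ B, C (x.2 - b)⁻¹ * (X 1 - C b),
    ?_, ?_, fun y hy hyx => ?_⟩
  · calc _ ≤ ∑ a ∈ A, degreeOf 1 (C (x.1 - a)⁻¹ * (X 0 - C a)) +
          ∑ b ∈ B, degreeOf 1 (C (x.2 - b)⁻¹ * (X 1 - C b)) :=
          (degreeOf_mul_le _ _ _).trans
            (add_le_add (degreeOf_prod_le _ _ _) (degreeOf_prod_le _ _ _))
      _ ≤ ∑ a ∈ A, 0 + ∑ b ∈ B, 1 :=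
          add_le_add (sum_le_sum fun a _ => degreeOf_C_mul_X_sub_C_le _ _ _ _)
            (sum_le_sum fun b _ => degreeOf_C_mul_X_sub_C_le _ _ _ _)
      _ < q := by simpa using hB
  all_goals simp only [map_mul, map_prod, map_sub, eval_C, eval_X, Matrix.cons_val_zero,
    Matrix.cons_val_one, Matrix.cons_val_fin_one]
  · rw [prod_eq_one fun a ha => inv_mul_cancel₀ (sub_ne_zero.2 (ne_of_mem_erase ha).symm),
      prod_eq_one fun b hb => inv_mul_cancel₀ (sub_ne_zero.2 (ne_of_mem_erase hb).symm), one_mul]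
  by_cases h1 : y.1 = x.1
  · have hyB : y.2 ∈ B := mem_erase.2 ⟨fun h2 => hyx (Prod.ext h1 h2),
      mem_image_of_mem _ (mem_filter.2 ⟨hy, h1⟩)⟩
    rw [prod_eq_zero hyB (by rw [sub_self, mul_zero]), mul_zero]
  · have hyA : y.1 ∈ A := mem_erase.2 ⟨h1, mem_image_of_mem _ hy⟩
    rw [prod_eq_zero hyA (by rw [sub_self, mul_zero]), zero_mul]

lemma iSup_map_evalOn_reducedBelow (hq : 2 ≤ q) {s : Finset (F × F)}
    (hs : ∀ x ∈ s, x.2 ^ q + x.2 = x.1 ^ (q + 1)) :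
    ⨆ n, (reducedBelow F q n).map (evalOn s) = ⊤ := by
  classical
  refine eq_top_iff.2 fun f _ => ?_
  rw [pi_eq_sum_univ f]
  refine sum_mem fun x _ => Submodule.smul_mem _ _ ?_
  obtain ⟨P, hPq, hPx, hPy⟩ := exists_reduced_indicator hq hs x.2
  have hP := (mem_reducedBelow_succ_iff (by omega)).2 ⟨hPq, le_rfl⟩
  have hindicator : (fun y : s => if x = y then (1 : F) else 0) = evalOn s P := by
    ext y
    rw [evalOn_apply]
    split_ifs with h
    · exact h ▸ hPx.symm
    · exact (hPy y y.2 fun h' => h (Subtype.ext h'.symm)).symm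
  rw [hindicator]
  exact Submodule.mem_iSup_of_mem _ (Submodule.mem_map_of_mem hP)

theorem card_le_weightedTotalDegree (hq : 2 ≤ q) {s : Finset (F × F)}
    (hs : ∀ x ∈ s, x.2 ^ q + x.2 = x.1 ^ (q + 1)) {Λ : MvPolynomial (Fin 2) F} (hΛ0 : Λ ≠ 0)
    (hΛ : degreeOf 1 Λ < q) (hvan : ∀ x ∈ s, eval ![x.1, x.2] Λ = 0) :
    #s ≤ weightedTotalDegree ![q, q + 1] Λ := by
  classical
  have hq0 : 0 < q := by omega
  set D := weightedTotalDegree ![q, q + 1] Λ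
  obtain ⟨hD, hlead⟩ := isPoleNumber_weightedTotalDegree hq0 hΛ0 hΛ
  have hΛD : Λ ∈ reducedBelow F q (D + 1) := (mem_reducedBelow_succ_iff hq0).2 ⟨hΛ, le_rfl⟩
  set g := spanningPoly q Λ D
  set T := (range (D + q * q)).filter fun t => IsPoleNumber q t ∧ ¬(D ≤ t ∧ IsPoleNumber q (t - D))
  set V := Submodule.span F (↑(T.image (evalOn s ∘ g)) : Set (s → F))
  have hgen : ∀ t, IsPoleNumber q t → evalOn s (g t) ∈ V := by
    intro t ht
    by_cases hT : t ∈ T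
    · exact Submodule.subset_span (mem_image_of_mem _ hT)
    rw [evalOn_spanningPoly_eq_zero hs hvan]
    · exact zero_mem _
    by_contra h
    have : ¬ t < D + q * q := fun hlt => hT (mem_filter.2 ⟨mem_range.2 hlt, ht, h⟩)
    exact h ⟨by omega, isPoleNumber_of_le hq0 (by omega)⟩
  have hspan : V = ⊤ := by
    refine eq_top_iff.2 <| (iSup_map_evalOn_reducedBelow hq hs).ge.trans <| iSup_le fun n => ?_
    rw [Submodule.map_le_iff_le_comap]
    refine (reducedBelow_le_span hq0 (fun t ht => spanningPoly_spec hq hD hΛD hlead ht) n).trans ?_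
    rw [Submodule.span_le]
    rintro _ ⟨t, ⟨ht, -⟩, rfl⟩
    exact hgen t ht
  calc #s = Module.finrank F V := by
        rw [hspan, finrank_top, Module.finrank_fintype_fun_eq_card, Fintype.card_coe]
    _ ≤ #(T.image (evalOn s ∘ g)) := finrank_span_finset_le_card _
    _ ≤ #T := card_image_le
    _ ≤ D := card_filter_isPoleNumber_not_translate_le hq0 hD

theorem exists_vanishing_mem_reducedBelow (hq : 0 < q) (s : Finset (F × F)) :
    ∃ Λ : MvPolynomial (Fin 2) F, Λ ≠ 0 ∧ Λ ∈ reducedBelow F q (#s + q * (q - 1) / 2 + 1) ∧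
      ∀ x ∈ s, eval ![x.1, x.2] Λ = 0 := by
  set A := reducedBelow F q (#s + q * (q - 1) / 2 + 1)
  have hrank : Module.finrank F (s → F) < Module.finrank F A := by
    have hsplit := card_filter_add_card_filter_not
      (s := range (#s + q * (q - 1) / 2 + 1)) (p := IsPoleNumber q)
    have hgaps := card_filter_not_isPoleNumber_le hq (#s + q * (q - 1) / 2 + 1)
    rw [card_range] at hsplit
    rw [Module.finrank_fintype_fun_eq_card, Fintype.card_coe, finrank_reducedBelow hq]
    omega
  have : FiniteDimensional F A := Module.finite_of_finrank_pos (by omega)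
  obtain ⟨⟨Λ, hΛA⟩, hker, hne⟩ := Submodule.exists_mem_ne_zero_of_ne_bot
    (LinearMap.ker_ne_bot_of_finrank_lt (f := (evalOn s).domRestrict A) hrank)
  refine ⟨Λ, fun h => hne (by simp [h]), hΛA, fun x hx => ?_⟩
  simpa using congrFun (LinearMap.mem_ker.1 hker) ⟨x, hx⟩

end HermitianCurve

theorem stmt_7_general (p e : ℕ) (hp : p.Prime) (he : 0 < e) (q : ℕ) (hq : q = p ^ e)
    (F : Type) [Field F] [Fintype F]
    (E : Set (F × F)) (hE : ∀ P ∈ E, P.2 ^ q + P.2 = P.1 ^ (q + 1)) :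
    (∃ Λ : MvPolynomial (Fin 2) F, Λ ≠ 0 ∧
      MvPolynomial.degreeOf 1 Λ ≤ q - 1 ∧
      (∀ P ∈ E, MvPolynomial.eval ![P.1, P.2] Λ = 0) ∧
      MvPolynomial.weightedTotalDegree ![q, q + 1] Λ ≤ E.ncard + q * (q - 1) / 2) ∧
    (∀ Λ : MvPolynomial (Fin 2) F, Λ ≠ 0 →
      MvPolynomial.degreeOf 1 Λ ≤ q - 1 →
      (∀ P ∈ E, MvPolynomial.eval ![P.1, P.2] Λ = 0) →
      E.ncard ≤ MvPolynomial.weightedTotalDegree ![q, q + 1] Λ) := by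
  have hq2 : 2 ≤ q := hq ▸ hp.two_le.trans (Nat.le_self_pow he.ne' p)
  set s := E.toFinite.toFinset
  have hmem : ∀ x, x ∈ s ↔ x ∈ E := fun x => Set.Finite.mem_toFinset _
  have hcard : E.ncard = s.card := Set.ncard_eq_toFinset_card E E.toFinite
  refine ⟨?_, fun Λ hΛ0 hΛ hvan => ?_⟩
  · obtain ⟨Λ, hΛ0, hΛ, hvan⟩ :=
      HermitianCurve.exists_vanishing_mem_reducedBelow (by omega : 0 < q) s
    rw [HermitianCurve.mem_reducedBelow_succ_iff (by omega)] at hΛ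
    exact ⟨Λ, hΛ0, by omega, fun x hx => hvan x ((hmem x).2 hx), hcard ▸ hΛ.2⟩
  · rw [hcard]
    exact HermitianCurve.card_le_weightedTotalDegree hq2 (fun x hx => hE x ((hmem x).1 hx)) hΛ0
      (by omega) fun x hx => hvan x ((hmem x).1 hx)

/-- Let `F` be the field with `q²` elements, `q = p^e`, and let `E` be a set of affine
points of the Hermitian curve `β^q + β = α^(q+1)`, which has genus `g = q(q-1)/2`.
Then (a) there is a nonzero polynomial with `y`-degree at most `q - 1` vanishing on `E`
and of weighted degree `deg_{q,q+1}` at most `|E| + g`, and (b) every nonzero polynomial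
with `y`-degree at most `q - 1` vanishing on `E` has weighted degree at least `|E|`. -/
theorem stmt_7 (p e : ℕ) (hp : p.Prime) (he : 0 < e) (q : ℕ) (hq : q = p ^ e)
    (F : Type) [Field F] [Fintype F] (hF : Fintype.card F = q ^ 2)
    (E : Set (F × F)) (hE : ∀ P ∈ E, P.2 ^ q + P.2 = P.1 ^ (q + 1)) :
    (∃ Λ : MvPolynomial (Fin 2) F, Λ ≠ 0 ∧
      MvPolynomial.degreeOf 1 Λ ≤ q - 1 ∧
      (∀ P ∈ E, MvPolynomial.eval ![P.1, P.2] Λ = 0) ∧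
      MvPolynomial.weightedTotalDegree ![q, q + 1] Λ ≤ E.ncard + q * (q - 1) / 2) ∧
    (∀ Λ : MvPolynomial (Fin 2) F, Λ ≠ 0 →
      MvPolynomial.degreeOf 1 Λ ≤ q - 1 →
      (∀ P ∈ E, MvPolynomial.eval ![P.1, P.2] Λ = 0) →
      E.ncard ≤ MvPolynomial.weightedTotalDegree ![q, q + 1] Λ) :=
  stmt_7_general p e hp he q hq F E hE
end

section
/- A polynomial p ∈ F[x, y] vanishes at every point of the Hermitian curve if and only if p lies in the ideal of F[x, y] generated by x^{q²} − x and y^q + y − x^{q+1}. -/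
/-!
Identify `F[x, y]` with `F[X][Y]` and divide by `H = Y ^ q + Y - X ^ (q + 1)`, which is monic
in `Y` of degree `q`. If `f` vanishes on the curve, so does the remainder `r`, whose `Y`-degree
is below `q`. For each `α ∈ F`, `t = α ^ (q + 1)` satisfies `t ^ q = t`, so by additivity of the
Frobenius `h = Y ^ q + Y - t` divides `h ^ q - h = Y ^ (q ^ 2) - Y`; hence `h` has `q` distinct
roots in `F` and `r(α, Y) = 0`. So every coefficient of `r` vanishes on `F`, i.e. is divisible
by `X ^ (q ^ 2) - X`.
-/

open Polynomial Polynomial.Bivariate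

namespace Polynomial

theorem monic_X_pow_add_X_sub_C {R : Type*} [CommRing R] [Nontrivial R] {n : ℕ} (hn : 1 < n)
    (t : R) : (X ^ n + X - C t : R[X]).Monic := by
  rw [add_sub_assoc]
  exact monic_X_pow_add (by rw [degree_X_sub_C]; exact_mod_cast hn)

theorem natDegree_X_pow_add_X_sub_C {R : Type*} [CommRing R] [Nontrivial R] {n : ℕ} (hn : 1 < n)
    (t : R) : (X ^ n + X - C t : R[X]).natDegree = n := by
  rw [add_sub_assoc, natDegree_add_eq_left_of_degree_lt, natDegree_X_pow]
  rw [degree_X_sub_C, degree_X_pow]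
  exact_mod_cast hn

theorem X_pow_add_X_sub_C_dvd {R : Type*} [CommRing R] (p : ℕ) [Fact p.Prime] [CharP R p]
    (e : ℕ) {t : R} (ht : t ^ p ^ e = t) :
    (X ^ p ^ e + X - C t : R[X]) ∣ X ^ (p ^ e) ^ 2 - X := by
  have hfrob : (X ^ p ^ e + X - C t : R[X]) ^ p ^ e = X ^ (p ^ e) ^ 2 + X ^ p ^ e - C t := by
    rw [sub_pow_char_pow, add_pow_char_pow, ← pow_mul, ← sq, ← C_pow, ht]
  have hpe : p ^ e ≠ 0 := pow_ne_zero _ (Fact.out : p.Prime).ne_zero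
  have : (X ^ (p ^ e) ^ 2 - X : R[X]) =
      (X ^ p ^ e + X - C t) ^ p ^ e - (X ^ p ^ e + X - C t) := by
    rw [hfrob]; ring
  rw [this]
  exact dvd_sub (dvd_pow_self _ hpe) dvd_rfl

variable {F : Type*} [Field F] [Fintype F]

theorem splits_X_pow_fintype_card_sub_X : (X ^ Fintype.card F - X : F[X]).Splits := by
  simpa [Nat.card_eq_fintype_card] using splits_X_pow_nat_card_sub_X (K := F)

theorem X_pow_card_sub_X_dvd_of_forall_eval_eq_zero {c : F[X]} (hc : ∀ a, c.eval a = 0) :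
    X ^ Fintype.card F - X ∣ c := by
  rcases eq_or_ne c 0 with rfl | hc0
  · exact dvd_zero _
  refine splits_X_pow_fintype_card_sub_X.dvd_of_roots_le_roots
    (FiniteField.X_pow_card_sub_X_ne_zero F Fintype.one_lt_card) ?_
  rw [FiniteField.roots_X_pow_card_sub_X, Multiset.le_iff_subset Finset.univ.nodup]
  exact fun a _ => (mem_roots hc0).2 (hc a)

theorem card_roots_toFinset_of_dvd_X_pow_card_sub_X [DecidableEq F] {g : F[X]}
    (hg : g ∣ X ^ Fintype.card F - X) : g.roots.toFinset.card = g.natDegree := by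
  have hne : (X ^ Fintype.card F - X : F[X]) ≠ 0 :=
    FiniteField.X_pow_card_sub_X_ne_zero F Fintype.one_lt_card
  have hnodup : g.roots.Nodup := Multiset.nodup_of_le (roots.le_of_dvd hne hg)
    (by rw [FiniteField.roots_X_pow_card_sub_X]; exact Finset.univ.nodup)
  rw [Multiset.toFinset_card_of_nodup hnodup,
    (splits_X_pow_fintype_card_sub_X.of_dvd hne hg).natDegree_eq_card_roots]

end Polynomial

namespace Polynomial.Bivariate

variable {F : Type*} [Field F] [Fintype F]

theorem evalEval_eq_zero_of_mem_span {B g : F[X][Y]}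
    (hg : g ∈ Ideal.span {C (X ^ Fintype.card F - X), B}) {α β : F} (hB : B.evalEval α β = 0) :
    g.evalEval α β = 0 := by
  have : Ideal.span {C (X ^ Fintype.card F - X), B} ≤ RingHom.ker (evalEvalRingHom α β) := by
    rw [Ideal.span_le]
    rintro _ (rfl | rfl) <;> simp [FiniteField.pow_card, hB]
  exact this hg

theorem mem_span_of_forall_evalEval_eq_zero [DecidableEq F] {B : F[X][Y]} (hB : B.Monic)
    (hroots : ∀ α, B.natDegree ≤ (B.map (evalRingHom α)).roots.toFinset.card) {g : F[X][Y]}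
    (hg : ∀ α β, B.evalEval α β = 0 → g.evalEval α β = 0) :
    g ∈ Ideal.span {C (X ^ Fintype.card F - X), B} := by
  rcases eq_or_ne B 1 with rfl | hB1
  · exact Ideal.mem_span_pair.2 ⟨0, g, by simp⟩
  set r := g %ₘ B
  have hgr : r + B * (g /ₘ B) = g := modByMonic_add_div g B
  have hr : ∀ α β, B.evalEval α β = 0 → r.evalEval α β = 0 := by
    intro α β hαβ
    have := congr_arg (evalEval α β) hgr
    rwa [evalEval_add, evalEval_mul, hαβ, zero_mul, add_zero, hg α β hαβ] at this
  have hfiber : ∀ α, r.map (evalRingHom α) = 0 := fun α =>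
    eq_zero_of_natDegree_lt_card_of_eval_eq_zero' _ (B.map (evalRingHom α)).roots.toFinset
      (fun β hβ => by
        rw [Multiset.mem_toFinset, mem_roots', IsRoot.def, map_evalRingHom_eval] at hβ
        rw [map_evalRingHom_eval]
        exact hr α β hβ.2)
      (natDegree_map_le.trans_lt ((natDegree_modByMonic_lt g hB hB1).trans_le (hroots α)))
  obtain ⟨D, hD⟩ : C (X ^ Fintype.card F - X) ∣ r := (C_dvd_iff_dvd_coeff _ _).2 fun j =>
    X_pow_card_sub_X_dvd_of_forall_eval_eq_zero fun α => by
      simpa using congr_arg (coeff · j) (hfiber α)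
  exact Ideal.mem_span_pair.2 ⟨D, g /ₘ B, by linear_combination hgr - hD⟩

theorem mem_span_iff_forall_evalEval_eq_zero [DecidableEq F] {B : F[X][Y]} (hB : B.Monic)
    (hroots : ∀ α, B.natDegree ≤ (B.map (evalRingHom α)).roots.toFinset.card) {g : F[X][Y]} :
    g ∈ Ideal.span {C (X ^ Fintype.card F - X), B} ↔
      ∀ α β, B.evalEval α β = 0 → g.evalEval α β = 0 :=
  ⟨fun hg _ _ => evalEval_eq_zero_of_mem_span hg, mem_span_of_forall_evalEval_eq_zero hB hroots⟩

noncomputable def hermitian (R : Type*) [CommRing R] (q : ℕ) : R[X][Y] :=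
  Y ^ q + Y - C (X ^ (q + 1))

section Hermitian

variable {R : Type*} [CommRing R] {q : ℕ}

theorem monic_hermitian [Nontrivial R] (hq : 1 < q) : (hermitian R q).Monic :=
  monic_X_pow_add_X_sub_C hq _

theorem natDegree_hermitian [Nontrivial R] (hq : 1 < q) : (hermitian R q).natDegree = q :=
  natDegree_X_pow_add_X_sub_C hq _

theorem map_evalRingHom_hermitian (α : R) :
    (hermitian R q).map (evalRingHom α) = X ^ q + X - C (α ^ (q + 1)) := by
  simp [hermitian]

theorem evalEval_hermitian (α β : R) :
    (hermitian R q).evalEval α β = β ^ q + β - α ^ (q + 1) := by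
  simp [hermitian, evalEval_C]

end Hermitian

theorem card_roots_map_evalRingHom_hermitian [DecidableEq F] (p : ℕ) [Fact p.Prime] [CharP F p]
    {e : ℕ} (he : 0 < e) (hF : Fintype.card F = (p ^ e) ^ 2) (α : F) :
    ((hermitian F (p ^ e)).map (evalRingHom α)).roots.toFinset.card = p ^ e := by
  have hq : 1 < p ^ e := Nat.one_lt_pow he.ne' (Fact.out : p.Prime).one_lt
  have hnorm : (α ^ (p ^ e + 1)) ^ p ^ e = α ^ (p ^ e + 1) := by
    rw [← pow_mul, add_one_mul, pow_add, ← sq, ← hF, FiniteField.pow_card, ← pow_succ']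
  rw [map_evalRingHom_hermitian, card_roots_toFinset_of_dvd_X_pow_card_sub_X
    (hF ▸ X_pow_add_X_sub_C_dvd p e hnorm), natDegree_X_pow_add_X_sub_C hq]

theorem mem_span_hermitian_iff (p : ℕ) [Fact p.Prime] [CharP F p] {e : ℕ} (he : 0 < e)
    (hF : Fintype.card F = (p ^ e) ^ 2) {g : F[X][Y]} :
    g ∈ Ideal.span {C (X ^ (p ^ e) ^ 2 - X), hermitian F (p ^ e)} ↔
      ∀ α β, β ^ p ^ e + β = α ^ (p ^ e + 1) → g.evalEval α β = 0 := by
  classical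
  have hq : 1 < p ^ e := Nat.one_lt_pow he.ne' (Fact.out : p.Prime).one_lt
  rw [← hF, mem_span_iff_forall_evalEval_eq_zero (monic_hermitian hq) fun α => by
    rw [natDegree_hermitian hq, card_roots_map_evalRingHom_hermitian p he hF]]
  simp only [evalEval_hermitian, sub_eq_zero]

theorem eval_equivMvPolynomial {R : Type*} [CommRing R] (x y : R) (g : R[X][Y]) :
    MvPolynomial.eval ![x, y] (equivMvPolynomial R g) = g.evalEval x y := by
  have : (MvPolynomial.eval ![x, y]).comp (equivMvPolynomial R).toRingHom =
      evalEvalRingHom x y := by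
    ext <;> simp
  exact congr($this g)

end Polynomial.Bivariate

open MvPolynomial

/-- Let `F` be the field with `q²` elements, `q = p^e`. A polynomial `f ∈ F[x, y]` vanishes
at every point of the Hermitian curve `β^q + β = α^(q+1)` if and only if `f` lies in the
ideal generated by `x^(q²) - x` and `y^q + y - x^(q+1)`. -/
theorem stmt_8 (p e : ℕ) (hp : p.Prime) (he : 0 < e) (q : ℕ) (hq : q = p ^ e)
    (F : Type) [Field F] [Fintype F] (hF : Fintype.card F = q ^ 2)
    (f : MvPolynomial (Fin 2) F) :
    (∀ α β : F, β ^ q + β = α ^ (q + 1) → MvPolynomial.eval ![α, β] f = 0) ↔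
      f ∈ Ideal.span {(X 0 : MvPolynomial (Fin 2) F) ^ (q ^ 2) - X 0,
        (X 1 : MvPolynomial (Fin 2) F) ^ q + X 1 - (X 0) ^ (q + 1)} := by
  subst hq
  have : Fact p.Prime := ⟨hp⟩
  have : CharP F p := charP_of_card_eq_prime_pow (hF.trans (pow_mul p e 2).symm)
  obtain ⟨g, rfl⟩ := (equivMvPolynomial F).surjective f
  have hspan : Ideal.span {(X 0 : MvPolynomial (Fin 2) F) ^ ((p ^ e) ^ 2) - X 0,
      (X 1 : MvPolynomial (Fin 2) F) ^ p ^ e + X 1 - (X 0) ^ (p ^ e + 1)} =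
      (Ideal.span {Polynomial.C (Polynomial.X ^ (p ^ e) ^ 2 - Polynomial.X),
        hermitian F (p ^ e)}).map (equivMvPolynomial F) := by
    rw [Ideal.map_span, Set.image_pair]
    simp [hermitian]
  rw [hspan, Ideal.mem_map_of_equiv]
  simp only [EmbeddingLike.apply_eq_iff_eq, exists_eq_right, mem_span_hermitian_iff p he hF,
    eval_equivMvPolynomial]
end

section
/- Let f ∈ F[x, y] with deg_y f ≤ q − 1 and deg_{q,q+1}(f) ≤ m, let r be a function from the points of the Hermitian curve to F, and let E = { P on the curve : r(P) ≠ f(P) }. Assume 2·|E| < q³ − m − g. Let R ∈ F[x, y] satisfy R(P) = r(P) for every curve point P, and let Λ ∈ F[x, y] be the unique nonzero polynomial with deg_y Λ ≤ q − 1 vanishing at every point of E, of minimal weighted degree among all such polynomials, and with leading coefficient 1. Then for any polynomials λ, ψ ∈ F[x, y] with deg_y λ ≤ q − 1, deg_y ψ ≤ q − 1, λ ≠ 0, deg_{q,q+1}(λ) ≤ deg_{q,q+1}(Λ), deg_{q,q+1}(ψ) ≤ deg_{q,q+1}(λ) + m, and λ·R − ψ lying in the ideal of F[x, y] generated by x^{q²}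 − x and y^q + y − x^{q+1}, there exists a nonzero γ ∈ F with λ = γ·Λ. -/
/-!
Order the monomials `x^i y^j` by the weight `q i + (q + 1) j`, breaking ties by the exponent
of `y`. Then `y^q` leads the curve equation `y^q + y - x^(q+1)`, and below `y^q` a monomial is
determined by its weight.

Footprint bound: a nonzero `μ` with `deg_y μ < q` and leading monomial `x^a y^b` has at most
`q a + (q + 1) b = deg_{q,q+1} μ` zeros on the curve. Indeed, dividing by the curve equation,
by `μ` and by their S-polynomial (led by `x^(a+q+1)`) shows that every function on these zeros
is the restriction of a combination of the `q a + (q + 1) b` monomials outside the ideal of the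
three leading monomials.

The weights `0, …, D` of monomials with `j < q` miss at most `g` values, so some nonzero
polynomial of weighted degree `≤ |E| + g` vanishes on `E`; hence `deg Λ ≤ |E| + g`. On the
curve the key equation reads `λ r = ψ`, so `λ f - ψ`, reduced modulo the curve equation, agrees
with `λ (f - r)` at the `q³` curve points and vanishes at the `q³ - |E|` of them outside `E`.
Its weighted degree is at most `deg λ + m ≤ |E| + g + m < q³ - |E|`, so by the footprint bound
it is zero, and `λ` vanishes on `E`. Minimality of `Λ` then gives `deg λ = deg Λ`; with `γ` the
leading coefficient of `λ`, the polynomial `λ - γ Λ` has smaller degree and vanishes on `E`, so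
it is zero.
-/

open MvPolynomial Finset
open scoped MonomialOrder
open Finsupp (weight single)

lemma Finsupp.weight_fin_two (a b : ℕ) (d : Fin 2 →₀ ℕ) :
    weight ![a, b] d = a * d 0 + b * d 1 := by
  simp [Finsupp.weight_apply, Finsupp.sum_fintype, Fin.sum_univ_two, mul_comm]

namespace MvPolynomial

variable {σ R : Type*}

lemma weightedTotalDegree_mul_le [CommSemiring R] (w : σ → ℕ) (p p' : MvPolynomial σ R) :
    weightedTotalDegree w (p * p') ≤ weightedTotalDegree w p + weightedTotalDegree w p' := by
  classical
  refine Finset.sup_le fun d hd => ?_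
  obtain ⟨a, ha, b, hb, rfl⟩ := mem_add.1 (support_mul p p' hd)
  rw [map_add]
  exact add_le_add (le_weightedTotalDegree w ha) (le_weightedTotalDegree w hb)

lemma weightedTotalDegree_sub_le [CommRing R] (w : σ → ℕ) (p p' : MvPolynomial σ R) :
    weightedTotalDegree w (p - p') ≤
      max (weightedTotalDegree w p) (weightedTotalDegree w p') := by
  classical
  refine Finset.sup_le fun d hd => ?_
  rcases mem_union.1 (support_sub σ p p' hd) with hd | hd
  exacts [le_max_of_le_left (le_weightedTotalDegree w hd),
    le_max_of_le_right (le_weightedTotalDegree w hd)]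

lemma eval_eq_zero_of_mem_span [CommRing R] {s : Set (MvPolynomial σ R)} {h : MvPolynomial σ R}
    (hh : h ∈ Ideal.span s) {v : σ → R} (hs : ∀ g ∈ s, eval v g = 0) : eval v h = 0 :=
  Ideal.span_le (I := RingHom.ker (eval v)).2 hs hh

end MvPolynomial

namespace Hermitian

open Finsupp (weight_fin_two)

noncomputable def hermitianKey (q : ℕ) : (Fin 2 →₀ ℕ) →+ ℕ ×ₗ ℕ ×ₗ ℕ where
  toFun d := toLex (weight ![q, q + 1] d, toLex (d 1, d 0))
  map_zero' := by simp
  map_add' d e := by simp only [map_add, Finsupp.coe_add, Pi.add_apply]; rfl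

lemma hermitianKey_injective (q : ℕ) : Function.Injective (hermitianKey q) := by
  intro d e h
  simp only [hermitianKey, AddMonoidHom.coe_mk, ZeroHom.coe_mk, toLex_inj, Prod.mk.injEq] at h
  ext i
  fin_cases i
  exacts [h.2.2, h.2.1]

lemma hermitianKey_le_iff {q : ℕ} {d e : Fin 2 →₀ ℕ} :
    hermitianKey q d ≤ hermitianKey q e ↔
      weight ![q, q + 1] d < weight ![q, q + 1] e ∨
        weight ![q, q + 1] d = weight ![q, q + 1] e ∧ toLex (d 1, d 0) ≤ toLex (e 1, e 0) :=
  Prod.Lex.toLex_le_toLex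

/-- Ties are broken in favour of `y`, so that `y ^ q` rather than `x ^ (q + 1)`, of the same
weight, leads the curve equation. -/
noncomputable def hermitianOrder (q : ℕ) : MonomialOrder (Fin 2) where
  syn := AddMonoidHom.mrange (hermitianKey q)
  toSyn :=
    { Equiv.ofBijective (hermitianKey q).mrangeRestrict
        ⟨fun d e h => hermitianKey_injective q (congrArg Subtype.val h),
          AddMonoidHom.mrangeRestrict_surjective _⟩ with
      map_add' := fun d e => by apply Subtype.ext; exact map_add (hermitianKey q) d e }
  toSyn_monotone d e hde := by
    show hermitianKey q d ≤ hermitianKey q e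
    obtain ⟨c, rfl⟩ := exists_add_of_le hde
    rw [map_add]
    refine le_add_of_nonneg_right ?_
    change toLex (0, toLex (0, 0)) ≤ toLex (_, toLex (_, _))
    simp only [Prod.Lex.toLex_le_toLex]
    omega

variable {q : ℕ}

lemma hermitianOrder_lt_iff {d e : Fin 2 →₀ ℕ} :
    d ≺[hermitianOrder q] e ↔ hermitianKey q d < hermitianKey q e := Iff.rfl

lemma weight_le_of_le {d e : Fin 2 →₀ ℕ} (h : d ≼[hermitianOrder q] e) :
    weight ![q, q + 1] d ≤ weight ![q, q + 1] e := by
  rcases hermitianKey_le_iff.1 h with h | h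
  exacts [h.le, h.1.le]

lemma lt_of_weight_lt {d e : Fin 2 →₀ ℕ} (h : weight ![q, q + 1] d < weight ![q, q + 1] e) :
    d ≺[hermitianOrder q] e :=
  lt_of_not_ge fun h' => (weight_le_of_le h').not_gt h

/-- `q i + (q + 1) j = j + (i + j) q`, so `j` is the weight mod `q`. -/
lemma eq_of_weight_eq (hq : 0 < q) {d e : Fin 2 →₀ ℕ} (hd : d 1 < q) (he : e 1 < q)
    (h : weight ![q, q + 1] d = weight ![q, q + 1] e) : d = e := by
  rw [weight_fin_two, weight_fin_two] at h
  have h1 : d 1 = e 1 := by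
    have := congrArg (· % q) (show d 1 + (d 0 + d 1) * q = e 1 + (e 0 + e 1) * q by linarith)
    simpa [Nat.add_mul_mod_self_right, Nat.mod_eq_of_lt hd, Nat.mod_eq_of_lt he] using this
  have h0 : d 0 = e 0 := by
    rw [h1] at h
    exact Nat.eq_of_mul_eq_mul_left hq (by omega)
  ext i
  fin_cases i
  exacts [h0, h1]

lemma weight_lt_of_lt (hq : 0 < q) {d e : Fin 2 →₀ ℕ} (hd : d 1 < q) (he : e 1 < q)
    (h : d ≺[hermitianOrder q] e) : weight ![q, q + 1] d < weight ![q, q + 1] e :=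
  (weight_le_of_le h.le).lt_of_ne fun heq => h.ne (congrArg _ (eq_of_weight_eq hq hd he heq))

@[simp]
lemma weight_single_zero (n : ℕ) : weight ![q, q + 1] (single 0 n) = q * n := by
  simp [weight_fin_two]

@[simp]
lemma weight_single_one (n : ℕ) : weight ![q, q + 1] (single 1 n) = (q + 1) * n := by
  simp [weight_fin_two]

variable {F : Type*} [Field F]

lemma weight_degree (p : MvPolynomial (Fin 2) F) :
    weight ![q, q + 1] ((hermitianOrder q).degree p) = weightedTotalDegree ![q, q + 1] p := by
  rcases eq_or_ne p 0 with rfl | hp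
  · simp [weightedTotalDegree]
  refine le_antisymm (le_weightedTotalDegree _ ((hermitianOrder q).degree_mem_support hp)) ?_
  exact Finset.sup_le fun d hd => weight_le_of_le ((hermitianOrder q).le_degree hd)

lemma weightedTotalDegree_le_of_degree_le {p p' : MvPolynomial (Fin 2) F}
    (h : (hermitianOrder q).degree p ≼[hermitianOrder q] (hermitianOrder q).degree p') :
    weightedTotalDegree ![q, q + 1] p ≤ weightedTotalDegree ![q, q + 1] p' := by
  rw [← weight_degree, ← weight_degree]
  exact weight_le_of_le h

lemma monomial_fin_two (i j : ℕ) (c : F) :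
    monomial (single (0 : Fin 2) i + single 1 j) c = C c * X 0 ^ i * X 1 ^ j := by
  simp [X_pow_eq_monomial, C_mul_monomial, monomial_mul]

noncomputable def hermitianPoly (F : Type*) [CommRing F] (q : ℕ) : MvPolynomial (Fin 2) F :=
  X 1 ^ q + X 1 - X 0 ^ (q + 1)

@[simp]
lemma eval_hermitianPoly (α β : F) :
    eval ![α, β] (hermitianPoly F q) = β ^ q + β - α ^ (q + 1) := by
  simp [hermitianPoly]

lemma degree_hermitianPoly (hq : 2 ≤ q) :
    (hermitianOrder q).degree (hermitianPoly F q) = single 1 q := by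
  classical
  have hdeg : ∀ (i : Fin 2) (n : ℕ),
      (hermitianOrder q).degree (X i ^ n : MvPolynomial (Fin 2) F) = single i n := fun i n => by
    rw [X_pow_eq_monomial, MonomialOrder.degree_monomial, if_neg one_ne_zero]
  have hX : (hermitianOrder q).degree (X 1 : MvPolynomial (Fin 2) F) = single 1 1 := by
    simpa using hdeg 1 1
  have hlt : single 1 1 ≺[hermitianOrder q] single 1 q := by
    apply lt_of_weight_lt
    rw [weight_single_one, weight_single_one]
    nlinarith
  have hsum : (hermitianOrder q).degree (X 1 ^ q + X 1 : MvPolynomial (Fin 2) F) = single 1 q := by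
    rw [MonomialOrder.degree_add_of_lt, hdeg]
    rwa [hX, hdeg]
  rw [hermitianPoly, MonomialOrder.degree_sub_of_lt, hsum]
  rw [hsum, hdeg, hermitianOrder_lt_iff]
  simp only [hermitianKey, AddMonoidHom.coe_mk, ZeroHom.coe_mk, weight_single_zero,
    weight_single_one, Prod.Lex.toLex_lt_toLex, Finsupp.single_eq_same,
    Finsupp.single_eq_of_ne zero_ne_one, Finsupp.single_eq_of_ne one_ne_zero]
  exact Or.inr ⟨by ring, by omega⟩

lemma hermitianPoly_ne_zero (hq : 2 ≤ q) : hermitianPoly F q ≠ 0 :=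
  (hermitianOrder q).ne_zero_of_degree_ne_zero <| by
    rw [degree_hermitianPoly hq, Ne, Finsupp.single_eq_zero]
    omega

lemma exists_sub_mem_span_hermitianPoly (hq : 2 ≤ q) (h : MvPolynomial (Fin 2) F) :
    ∃ r, h - r ∈ Ideal.span {hermitianPoly F q} ∧ (∀ d ∈ r.support, d 1 < q) ∧
      weightedTotalDegree ![q, q + 1] r ≤ weightedTotalDegree ![q, q + 1] h := by
  obtain ⟨g, r, hgr, hdeg, hr⟩ := (hermitianOrder q).div_single
    ((hermitianOrder q).isUnit_leadingCoeff.2 (hermitianPoly_ne_zero hq)) h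
  have hr_eq : r = h - hermitianPoly F q * g := by rw [hgr]; ring
  refine ⟨r, ?_, fun d hd => ?_, weightedTotalDegree_le_of_degree_le ?_⟩
  · rw [hr_eq, sub_sub_cancel]
    exact Ideal.mul_mem_right _ _ (Ideal.mem_span_singleton_self _)
  · have := hr d hd
    rw [degree_hermitianPoly hq, Finsupp.single_le_iff] at this
    omega
  · rw [hr_eq]
    exact (hermitianOrder q).degree_sub_le.trans (sup_le le_rfl hdeg)

noncomputable def evalOn (Z : Finset (F × F)) : MvPolynomial (Fin 2) F →ₗ[F] Z → F where
  toFun p P := eval ![P.1.1, P.1.2] p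
  map_add' p p' := by ext; simp
  map_smul' c p := by ext; simp

lemma evalOn_apply (Z : Finset (F × F)) (p : MvPolynomial (Fin 2) F) (P : Z) :
    evalOn Z p P = eval ![P.1.1, P.1.2] p := rfl

lemma evalOn_surjective [Fintype F] (Z : Finset (F × F)) : Function.Surjective (evalOn Z) := by
  classical
  intro g
  have hG : (fun v : Fin 2 → F => if h : (v 0, v 1) ∈ Z then g ⟨_, h⟩ else 0) ∈
      (restrictDegree (Fin 2) F (Fintype.card F - 1)).map (evalₗ F (Fin 2)) := by
    rw [map_restrict_dom_evalₗ]
    trivial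
  obtain ⟨p, -, hp⟩ := Submodule.mem_map.1 hG
  refine ⟨p, funext fun P => ?_⟩
  rw [evalOn_apply, ← evalₗ_apply, hp]
  simp

instance (S : Finset (Fin 2 →₀ ℕ)) :
    Module.Finite F (restrictSupport F (S : Set (Fin 2 →₀ ℕ))) :=
  Module.Finite.of_basis (basisRestrictSupport F _)

lemma finrank_restrictSupport (S : Finset (Fin 2 →₀ ℕ)) :
    Module.finrank F (restrictSupport F (S : Set (Fin 2 →₀ ℕ))) = #S := by
  rw [Module.finrank_eq_card_basis (basisRestrictSupport F _)]
  simp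

lemma card_le_card_of_forall_exists_eval_eq [Fintype F] {Z : Finset (F × F)}
    {S : Finset (Fin 2 →₀ ℕ)}
    (h : ∀ p, ∃ r ∈ restrictSupport F (S : Set (Fin 2 →₀ ℕ)),
      ∀ P ∈ Z, eval ![P.1, P.2] r = eval ![P.1, P.2] p) :
    #Z ≤ #S := by
  set φ := (evalOn Z).comp (restrictSupport F (S : Set (Fin 2 →₀ ℕ))).subtype
  have hφ : Function.Surjective φ := by
    intro g
    obtain ⟨p, rfl⟩ := evalOn_surjective Z g
    obtain ⟨r, hr, hrp⟩ := h p
    exact ⟨⟨r, hr⟩, funext fun P => hrp P.1 P.2⟩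
  have := LinearMap.finrank_range_le φ
  rwa [LinearMap.range_eq_top.2 hφ, finrank_top, Module.finrank_fintype_fun_eq_card,
    Fintype.card_coe, finrank_restrictSupport] at this

lemma exists_ne_zero_mem_restrictSupport {Z : Finset (F × F)} {S : Finset (Fin 2 →₀ ℕ)}
    (h : #Z < #S) :
    ∃ p ∈ restrictSupport F (S : Set (Fin 2 →₀ ℕ)), p ≠ 0 ∧
      ∀ P ∈ Z, eval ![P.1, P.2] p = 0 := by
  set φ := (evalOn Z).comp (restrictSupport F (S : Set (Fin 2 →₀ ℕ))).subtype
  have : LinearMap.ker φ ≠ ⊥ := LinearMap.ker_ne_bot_of_finrank_lt <| by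
    rwa [Module.finrank_fintype_fun_eq_card, Fintype.card_coe, finrank_restrictSupport]
  obtain ⟨⟨p, hp⟩, hker, hne⟩ := Submodule.exists_mem_ne_zero_of_ne_bot this
  refine ⟨p, hp, fun h0 => hne (Subtype.ext h0), fun P hP => ?_⟩
  exact congrFun (LinearMap.mem_ker.1 hker) ⟨P, hP⟩

lemma weight_lt_of_mem_support_sub_leadingTerm (hq : 0 < q) {μ : MvPolynomial (Fin 2) F}
    (hμy : ∀ d ∈ μ.support, d 1 < q) {e : Fin 2 →₀ ℕ}
    (he : e ∈ (μ - (hermitianOrder q).leadingTerm μ).support) :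
    weight ![q, q + 1] e < weightedTotalDegree ![q, q + 1] μ := by
  classical
  set m := hermitianOrder q
  have hμ : μ ≠ 0 := by rintro rfl; simp at he
  have hcoeff := mem_support_iff.1 he
  rw [MonomialOrder.leadingTerm, coeff_sub, coeff_monomial] at hcoeff
  have hne : m.degree μ ≠ e := by
    rintro rfl
    simp [MonomialOrder.leadingCoeff] at hcoeff
  rw [if_neg hne, sub_zero] at hcoeff
  have hemem := mem_support_iff.2 hcoeff
  rw [← weight_degree]
  exact weight_lt_of_lt hq (hμy e hemem) (hμy _ (m.degree_mem_support hμ))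
    ((m.le_degree hemem).lt_of_ne fun h => hne (m.toSyn.injective h).symm)

lemma weight_lt_of_mem_support_monomial_mul (hq : 0 < q) {μ : MvPolynomial (Fin 2) F}
    (hμy : ∀ d ∈ μ.support, d 1 < q) (s : Fin 2 →₀ ℕ) {e : Fin 2 →₀ ℕ}
    (he : e ∈ (monomial s 1 * (μ - (hermitianOrder q).leadingTerm μ)).support) :
    weight ![q, q + 1] e < weight ![q, q + 1] s + weightedTotalDegree ![q, q + 1] μ := by
  rw [mem_support_iff, coeff_monomial_mul', one_mul] at he
  split_ifs at he with hle
  · obtain ⟨e', rfl⟩ := exists_add_of_le hle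
    rw [add_tsub_cancel_left] at he
    rw [map_add]
    exact Nat.add_lt_add_left
      (weight_lt_of_mem_support_sub_leadingTerm hq hμy (mem_support_iff.2 he)) _
  · exact absurd rfl he

/-- The terms other than `-c x^(a+q+1)` of the S-polynomial `c x^a · (y^q + y - x^(q+1)) -
y^(q-b) μ`, where `c x^a y^b` is the leading term of `μ`, all have smaller weight. -/
lemma degree_sub_monomial_mul_lt (hq : 2 ≤ q) {μ : MvPolynomial (Fin 2) F} (hμ : μ ≠ 0)
    (hμy : ∀ d ∈ μ.support, d 1 < q) {a b : ℕ}
    (hab : (hermitianOrder q).degree μ = single 0 a + single 1 b) (c : F) :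
    (hermitianOrder q).degree (monomial (single 0 a + single 1 1) c -
      monomial (single 1 (q - b)) 1 * (μ - (hermitianOrder q).leadingTerm μ))
        ≺[hermitianOrder q] single 0 (a + q + 1) := by
  have hb : b < q := by simpa [hab] using hμy _ ((hermitianOrder q).degree_mem_support hμ)
  have hpos : 0 ≺[hermitianOrder q] single 0 (a + q + 1) :=
    lt_of_weight_lt (by rw [weight_single_zero, map_zero]; positivity)
  rw [(hermitianOrder q).degree_lt_iff hpos]
  intro e he
  apply lt_of_weight_lt
  rw [weight_single_zero]
  rcases mem_union.1 (support_sub _ _ _ he) with he | he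
  · rw [mem_singleton.1 (support_monomial_subset he), map_add, weight_single_zero,
      weight_single_one]
    nlinarith
  · have he' := weight_lt_of_mem_support_monomial_mul (by omega) hμy _ he
    rw [← weight_degree, hab, map_add, weight_single_zero, weight_single_one,
      weight_single_one] at he'
    have hsplit : (q + 1) * (q - b) + (q + 1) * b = (q + 1) * q := by
      rw [← mul_add, Nat.sub_add_cancel hb.le]
    nlinarith

lemma exists_mem_span_degree_eq (hq : 2 ≤ q) {μ : MvPolynomial (Fin 2) F} (hμ : μ ≠ 0)
    (hμy : ∀ d ∈ μ.support, d 1 < q) :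
    ∃ ν ∈ Ideal.span {hermitianPoly F q, μ}, ν ≠ 0 ∧
      (hermitianOrder q).degree ν = single 0 ((hermitianOrder q).degree μ 0 + q + 1) := by
  classical
  set m := hermitianOrder q
  set a := m.degree μ 0
  set b := m.degree μ 1
  set c := m.leadingCoeff μ
  have hb : b < q := hμy _ (m.degree_mem_support hμ)
  have hc : c ≠ 0 := m.leadingCoeff_ne_zero_iff.2 hμ
  have hab : m.degree μ = single 0 a + single 1 b := by
    ext i
    fin_cases i <;> simp [a, b]
  have hlead : m.leadingTerm μ = C c * X 0 ^ a * X 1 ^ b := by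
    rw [MonomialOrder.leadingTerm, hab]
    exact monomial_fin_two a b c
  set ν := C c * X 0 ^ a * hermitianPoly F q - X 1 ^ (q - b) * μ
  have hν : ν = monomial (single 0 (a + q + 1)) (-c) + (monomial (single 0 a + single 1 1) c -
      monomial (single 1 (q - b)) 1 * (μ - m.leadingTerm μ)) := by
    rw [hlead, monomial_fin_two, ← C_mul_X_pow_eq_monomial, ← C_mul_X_pow_eq_monomial]
    simp only [ν, hermitianPoly, map_neg, C_1]
    linear_combination (-C c * X 0 ^ a) * (pow_sub_mul_pow (X 1 : MvPolynomial (Fin 2) F) hb.le)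
  have hdeg : m.degree ν = single 0 (a + q + 1) := by
    rw [hν, m.degree_add_of_lt] <;> rw [m.degree_monomial, if_neg (neg_ne_zero.2 hc)]
    exact degree_sub_monomial_mul_lt hq hμ hμy hab c
  refine ⟨ν, ?_, m.ne_zero_of_degree_ne_zero ?_, hdeg⟩
  · exact Ideal.sub_mem _ (Ideal.mul_mem_left _ _ (Ideal.subset_span (by simp)))
      (Ideal.mul_mem_left _ _ (Ideal.subset_span (by simp)))
  · rw [hdeg, Ne, Finsupp.single_eq_zero]
    omega

/-- The monomials `x^i y^j` with `j < q` divisible neither by `x^a y^b` nor by `x^(a+q+1)`. -/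
noncomputable def footprint (q a b : ℕ) : Finset (Fin 2 →₀ ℕ) :=
  ((range (a + q + 1) ×ˢ range b) ∪ (range a ×ˢ Ico b q)).image
    fun ij => single 0 ij.1 + single 1 ij.2

lemma mem_footprint {a b : ℕ} {d : Fin 2 →₀ ℕ} (hq : d 1 < q) (ha : d 0 < a + q + 1)
    (hab : ¬(a ≤ d 0 ∧ b ≤ d 1)) : d ∈ footprint q a b := by
  refine mem_image.2 ⟨(d 0, d 1), ?_, ?_⟩
  · simp only [mem_union, mem_product, mem_range, mem_Ico]
    omega
  · ext i
    fin_cases i <;> simp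

lemma card_footprint_le {a b : ℕ} (hb : b ≤ q) :
    #(footprint q a b) ≤ q * a + (q + 1) * b := by
  refine card_image_le.trans ((card_union_le _ _).trans (le_of_eq ?_))
  simp only [card_product, card_range, Nat.card_Ico]
  zify [hb]
  ring

/-- Division by the curve equation, by `μ` and by their S-polynomial. -/
lemma exists_mem_restrictSupport_footprint_sub_mem_span (hq : 2 ≤ q)
    {μ : MvPolynomial (Fin 2) F} (hμ : μ ≠ 0) (hμy : ∀ d ∈ μ.support, d 1 < q)
    (p : MvPolynomial (Fin 2) F) :
    ∃ r ∈ restrictSupport F (footprint q ((hermitianOrder q).degree μ 0)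
      ((hermitianOrder q).degree μ 1) : Set (Fin 2 →₀ ℕ)),
      p - r ∈ Ideal.span {hermitianPoly F q, μ} := by
  obtain ⟨ν, hνI, hν0, hνdeg⟩ := exists_mem_span_degree_eq hq hμ hμy
  set B := ![hermitianPoly F q, μ, ν]
  have hBI : ∀ i, B i ∈ Ideal.span {hermitianPoly F q, μ} := by
    intro i
    fin_cases i
    exacts [Ideal.subset_span (by simp [B]), Ideal.subset_span (by simp [B]), hνI]
  have hB0 : ∀ i, B i ≠ 0 := by
    intro i
    fin_cases i
    exacts [hermitianPoly_ne_zero hq, hμ, hν0]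
  obtain ⟨g, r, hp, -, hr⟩ :=
    (hermitianOrder q).div (fun i => (hermitianOrder q).isUnit_leadingCoeff.2 (hB0 i)) p
  refine ⟨r, fun d hd => ?_, ?_⟩
  · have h0 := hr d hd 0
    have h2 := hr d hd 2
    rw [show B 0 = hermitianPoly F q from rfl, degree_hermitianPoly hq,
      Finsupp.single_le_iff] at h0
    rw [show B 2 = ν from rfl, hνdeg, Finsupp.single_le_iff] at h2
    exact mem_footprint (by omega) (by omega) fun h =>
      hr d hd 1 (Finsupp.le_def.2 (Fin.forall_fin_two.2 h))
  · rw [hp, add_sub_cancel_right]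
    have := LinearMap.mem_range_self (Finsupp.linearCombination (MvPolynomial (Fin 2) F) B) g
    rw [Finsupp.range_linearCombination] at this
    exact Submodule.span_le.2 (Set.range_subset_iff.2 hBI) this

def hermitianCurve (F : Type*) [Field F] [Fintype F] [DecidableEq F] (q : ℕ) : Finset (F × F) :=
  {P | P.2 ^ q + P.2 = P.1 ^ (q + 1)}

@[simp]
lemma mem_hermitianCurve [Fintype F] [DecidableEq F] {P : F × F} :
    P ∈ hermitianCurve F q ↔ P.2 ^ q + P.2 = P.1 ^ (q + 1) := by
  simp [hermitianCurve]

theorem card_filter_eval_eq_zero_le [Fintype F] [DecidableEq F] (hq : 2 ≤ q)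
    {μ : MvPolynomial (Fin 2) F} (hμ : μ ≠ 0) (hμy : ∀ d ∈ μ.support, d 1 < q) :
    #{P ∈ hermitianCurve F q | eval ![P.1, P.2] μ = 0} ≤
      weightedTotalDegree ![q, q + 1] μ := by
  set d := (hermitianOrder q).degree μ
  calc #{P ∈ hermitianCurve F q | eval ![P.1, P.2] μ = 0}
      ≤ #(footprint q (d 0) (d 1)) := by
        refine card_le_card_of_forall_exists_eval_eq fun p => ?_
        obtain ⟨r, hr, hpr⟩ := exists_mem_restrictSupport_footprint_sub_mem_span hq hμ hμy p
        refine ⟨r, hr, fun P hP => ?_⟩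
        obtain ⟨hPc, hPμ⟩ := mem_filter.1 hP
        rw [eq_comm, ← sub_eq_zero, ← map_sub, eval_eq_zero_of_mem_span hpr
          (by simp [hPμ, mem_hermitianCurve.1 hPc])]
    _ ≤ q * d 0 + (q + 1) * d 1 :=
        card_footprint_le (hμy _ ((hermitianOrder q).degree_mem_support hμ)).le
    _ = weightedTotalDegree ![q, q + 1] μ := by rw [← weight_degree, weight_fin_two]

section Curve

variable [Fintype F]

lemma two_le_of_card_eq_sq (hF : Fintype.card F = q ^ 2) : 2 ≤ q := by
  have := hF ▸ Fintype.one_lt_card (α := F)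
  nlinarith

lemma charP_of_card_eq {p e : ℕ} (hp : p.Prime) (hq : q = p ^ e) (hF : Fintype.card F = q ^ 2) :
    CharP F p := by
  obtain ⟨n, hchar, hcard⟩ := FiniteField.card F (ringChar F)
  have hdvd : ringChar F ∣ p ^ (e * 2) := by
    rw [pow_mul, ← hq, ← hF, hcard]
    exact dvd_pow_self _ n.ne_zero
  rw [← (Nat.prime_dvd_prime_iff_eq hchar hp).1 (hchar.dvd_of_dvd_pow hdvd)]
  exact ringChar.charP F

variable [DecidableEq F]

lemma card_filter_pow_add_mul_eq_zero_le (hq : 2 ≤ q) (u : F) :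
    #{β : F | β ^ q + u * β = 0} ≤ q := by
  set f : Polynomial F := Polynomial.X ^ q + Polynomial.C u * Polynomial.X
  have hdeg : f.natDegree = q := by
    rw [Polynomial.natDegree_add_eq_left_of_natDegree_lt] <;> rw [Polynomial.natDegree_X_pow]
    exact ((Polynomial.natDegree_C_mul_le u _).trans Polynomial.natDegree_X_le).trans_lt
      (by omega)
  have hf : f ≠ 0 := Polynomial.ne_zero_of_natDegree_gt (n := 0) (by omega)
  refine (Polynomial.card_le_degree_of_subset_roots fun β hβ => ?_).trans hdeg.le
  rw [Polynomial.mem_roots hf]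
  simpa [f] using (mem_filter.1 hβ).2

lemma card_fiber_eq_of_card_eq_sq {G H : Type*} [AddGroup G] [Fintype G] [AddGroup H]
    [DecidableEq H] (T : G →+ H) {S : Finset H} (hTS : ∀ x, T x ∈ S) (hS : #S ≤ q)
    (hker : #{x | T x = 0} ≤ q) (hG : Fintype.card G = q ^ 2) {c : H} (hc : c ∈ S) :
    #{x | T x = c} = q := by
  have himage : univ.image T ⊆ S := fun y hy => by
    obtain ⟨x, -, rfl⟩ := mem_image.1 hy
    exact hTS x
  have hfiber : ∀ y ∈ univ.image T, #{x | T x = y} = #{x | T x = 0} := fun y hy =>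
    AddMonoidHom.card_fiber_eq_of_mem_range T (by simpa using hy) ⟨0, map_zero T⟩
  have hcount : q ^ 2 = #(univ.image T) * #{x | T x = 0} := by
    rw [← hG, ← card_univ, card_eq_sum_card_fiberwise (f := T) (t := univ.image T)
      (fun x _ => mem_image_of_mem T (mem_univ x)), sum_congr rfl hfiber, sum_const, smul_eq_mul]
  have hcard : #(univ.image T) = q ∧ #{x | T x = 0} = q := by
    have := card_le_card himage
    constructor <;> nlinarith
  rw [← eq_of_subset_of_card_le himage (by omega)] at hc
  exact (hfiber c hc).trans hcard.2

/-- `β ↦ β ^ q + β` is the trace onto the subfield `{x | x ^ q = x}` of order `q`. -/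
lemma card_filter_pow_add_self_eq {p e : ℕ} (hp : p.Prime) (hq : q = p ^ e)
    (hF : Fintype.card F = q ^ 2) {c : F} (hc : c ^ q = c) :
    #{β : F | β ^ q + β = c} = q := by
  have := charP_of_card_eq hp hq hF
  have : Fact p.Prime := ⟨hp⟩
  have hq2 := two_le_of_card_eq_sq hF
  have hadd : ∀ a b : F, (a + b) ^ q = a ^ q + b ^ q := fun a b => by
    rw [hq]
    exact add_pow_char_pow a b p e
  have hfrob : ∀ β : F, (β ^ q) ^ q = β := fun β => by
    rw [← pow_mul, ← sq, ← hF, FiniteField.pow_card]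
  refine card_fiber_eq_of_card_eq_sq (AddMonoidHom.mk' (fun β => β ^ q + β)
      fun a b => by rw [hadd]; ring) (S := {x | x ^ q = x}) (fun β => ?_) ?_ ?_ hF (by simpa)
  · simp only [AddMonoidHom.mk'_apply, mem_filter, mem_univ, true_and]
    rw [hadd, hfrob, add_comm]
  · convert card_filter_pow_add_mul_eq_zero_le hq2 (-1 : F) using 3
    rw [neg_one_mul, ← sub_eq_add_neg, sub_eq_zero]
  · simpa using card_filter_pow_add_mul_eq_zero_le hq2 (1 : F)

theorem card_hermitianCurve {p e : ℕ} (hp : p.Prime) (hq : q = p ^ e)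
    (hF : Fintype.card F = q ^ 2) : #(hermitianCurve F q) = q ^ 3 := by
  have hnorm : ∀ α : F, (α ^ (q + 1)) ^ q = α ^ (q + 1) := fun α => by
    rw [← pow_mul, show (q + 1) * q = q ^ 2 + q by ring, pow_add, ← hF, FiniteField.pow_card,
      pow_succ']
  rw [hermitianCurve, card_filter, Fintype.sum_prod_type]
  simp_rw [← card_filter]
  rw [sum_congr rfl fun α _ => card_filter_pow_add_self_eq hp hq hF (hnorm α), sum_const,
    card_univ, hF, smul_eq_mul]
  ring

end Curve

section Existence

noncomputable def lowMonomials (q D : ℕ) : Finset (Fin 2 →₀ ℕ) :=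
  {d ∈ (range (D + 1) ×ˢ range q).image fun ij => single 0 ij.1 + single 1 ij.2 |
    weight ![q, q + 1] d ≤ D}

lemma card_filter_mod_le_div_le (hq : 0 < q) (D : ℕ) :
    #{w ∈ range (D + 1) | w % q ≤ w / q} ≤ #(lowMonomials q D) := by
  have hweight : ∀ w, w % q ≤ w / q →
      weight ![q, q + 1] (single 0 (w / q - w % q) + single 1 (w % q)) = w := fun w hw => by
    have := Nat.div_add_mod w q
    simp only [weight_fin_two, Finsupp.add_apply, Finsupp.single_eq_same,
      Finsupp.single_eq_of_ne zero_ne_one, Finsupp.single_eq_of_ne one_ne_zero]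
    zify [hw] at this ⊢
    linear_combination this
  refine card_le_card_of_injOn (fun w => single 0 (w / q - w % q) + single 1 (w % q)) ?_ ?_
  · intro w hw
    simp only [coe_filter, mem_range, Set.mem_ofPred_eq] at hw
    simp only [lowMonomials, coe_filter, mem_image, mem_product, mem_range, Set.mem_ofPred_eq]
    refine ⟨⟨(w / q - w % q, w % q), ⟨?_, Nat.mod_lt w hq⟩, rfl⟩,
      (hweight w hw.2).le.trans (by omega)⟩
    have := Nat.div_le_self w q
    omega
  · intro w hw w' hw' h
    rw [← hweight w (mem_filter.1 hw).2, ← hweight w' (mem_filter.1 hw').2]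
    exact congrArg _ h

lemma card_filter_not_mod_le_div_le (hq : 0 < q) (D : ℕ) :
    #{w ∈ range (D + 1) | ¬w % q ≤ w / q} ≤ q * (q - 1) / 2 := by
  have hpairs : #{x ∈ range q ×ˢ range q | x.1 < x.2} = q * (q - 1) / 2 := by
    rw [card_product_filter_lt, card_range, Nat.choose_two_right]
  rw [← hpairs]
  refine card_le_card_of_injOn (fun w => (w / q, w % q)) (fun w hw => ?_) fun w _ w' _ h => ?_
  · simp only [coe_filter, mem_range, Set.mem_ofPred_eq, mem_product] at hw ⊢
    have := Nat.mod_lt w hq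
    exact ⟨⟨by omega, this⟩, by omega⟩
  · simp only [Prod.mk.injEq] at h
    rw [← Nat.div_add_mod w q, ← Nat.div_add_mod w' q, h.1, h.2]

/-- Write a weight as `w = q k + j` with `j < q`: if `j ≤ k` it is the weight of
`x ^ (k - j) * y ^ j`, and otherwise `(k, j)` is one of the `g` pairs `k < j < q`. -/
lemma le_card_lowMonomials (hq : 0 < q) (D : ℕ) :
    D + 1 ≤ #(lowMonomials q D) + q * (q - 1) / 2 := by
  have := card_filter_add_card_filter_not (s := range (D + 1)) (fun w => w % q ≤ w / q)
  rw [card_range] at this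
  have := card_filter_mod_le_div_le hq D
  have := card_filter_not_mod_le_div_le hq D
  omega

lemma exists_ne_zero_eval_eq_zero (hq : 0 < q) (E : Finset (F × F)) :
    ∃ μ : MvPolynomial (Fin 2) F, μ ≠ 0 ∧ (∀ d ∈ μ.support, d 1 < q) ∧
      weightedTotalDegree ![q, q + 1] μ ≤ #E + q * (q - 1) / 2 ∧
      ∀ P ∈ E, eval ![P.1, P.2] μ = 0 := by
  set D := #E + q * (q - 1) / 2
  obtain ⟨μ, hμS, hμ0, hμE⟩ := exists_ne_zero_mem_restrictSupport (F := F) (Z := E)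
    (S := lowMonomials q D) (by have := le_card_lowMonomials hq D; omega)
  have hsupp : ∀ d ∈ μ.support, d ∈ lowMonomials q D := fun d hd => hμS hd
  refine ⟨μ, hμ0, fun d hd => ?_,
    Finset.sup_le fun d hd => (mem_filter.1 (hsupp d hd)).2, hμE⟩
  obtain ⟨ij, hij, rfl⟩ := mem_image.1 (mem_filter.1 (hsupp d hd)).1
  simpa using (mem_product.1 hij).2

end Existence

section KeyEquation

variable [Fintype F] [DecidableEq F] {p e : ℕ}

lemma eq_zero_of_eval_eq_zero_of_notMem (hp : p.Prime) (hq : q = p ^ e)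
    (hF : Fintype.card F = q ^ 2) {G : MvPolynomial (Fin 2) F} (hGy : ∀ d ∈ G.support, d 1 < q)
    {S : Finset (F × F)} (hG : ∀ P ∈ hermitianCurve F q, P ∉ S → eval ![P.1, P.2] G = 0)
    (hdeg : weightedTotalDegree ![q, q + 1] G + #S < q ^ 3) : G = 0 := by
  by_contra hG0
  have hzeros : hermitianCurve F q \ S ⊆ {P ∈ hermitianCurve F q | eval ![P.1, P.2] G = 0} :=
    fun P hP => mem_filter.2 ⟨(mem_sdiff.1 hP).1, hG P (mem_sdiff.1 hP).1 (mem_sdiff.1 hP).2⟩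
  have := (le_card_sdiff S (hermitianCurve F q)).trans ((card_le_card hzeros).trans
    (card_filter_eval_eq_zero_le (two_le_of_card_eq_sq hF) hG0 hGy))
  rw [card_hermitianCurve hp hq hF] at this
  omega

theorem eval_eq_zero_of_ne (hp : p.Prime) (hq : q = p ^ e) (hF : Fintype.card F = q ^ 2)
    {m : ℕ} {f R lam ψ : MvPolynomial (Fin 2) F} {r : F × F → F}
    (hfdeg : weightedTotalDegree ![q, q + 1] f ≤ m)
    (hR : ∀ P ∈ hermitianCurve F q, eval ![P.1, P.2] R = r P)
    (hψdeg : weightedTotalDegree ![q, q + 1] ψ ≤ weightedTotalDegree ![q, q + 1] lam + m)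
    (hkey : lam * R - ψ ∈ Ideal.span {X 0 ^ q ^ 2 - X 0, hermitianPoly F q})
    {S : Finset (F × F)}
    (hS : ∀ P ∈ hermitianCurve F q, r P ≠ eval ![P.1, P.2] f → P ∈ S)
    (hsmall : weightedTotalDegree ![q, q + 1] lam + m + #S < q ^ 3) {P : F × F}
    (hP : P ∈ hermitianCurve F q) (hrP : r P ≠ eval ![P.1, P.2] f) :
    eval ![P.1, P.2] lam = 0 := by
  have hcurve : ∀ P ∈ hermitianCurve F q, eval ![P.1, P.2] (hermitianPoly F q) = 0 :=
    fun P hP => by simpa [sub_eq_zero] using hP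
  have hkeyP : ∀ P ∈ hermitianCurve F q, eval ![P.1, P.2] lam * r P = eval ![P.1, P.2] ψ := by
    intro P hP
    have := eval_eq_zero_of_mem_span hkey (v := ![P.1, P.2])
      (by simp [← hF, FiniteField.pow_card, hcurve P hP])
    rwa [map_sub, map_mul, hR P hP, sub_eq_zero] at this
  obtain ⟨G, hG, hGy, hGdeg⟩ := exists_sub_mem_span_hermitianPoly (two_le_of_card_eq_sq hF)
    (lam * f - ψ)
  have hGP : ∀ P ∈ hermitianCurve F q,
      eval ![P.1, P.2] G = eval ![P.1, P.2] lam * (eval ![P.1, P.2] f - r P) := by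
    intro P hP
    have := eval_eq_zero_of_mem_span hG (v := ![P.1, P.2]) (by simpa using hcurve P hP)
    rw [map_sub, map_sub, map_mul, sub_eq_zero] at this
    rw [← this, ← hkeyP P hP]
    ring
  have hG0 : G = 0 := by
    refine eq_zero_of_eval_eq_zero_of_notMem hp hq hF hGy (S := S) (fun P hP hPS => ?_) ?_
    · rw [hGP P hP, not_ne_iff.1 fun h => hPS (hS P hP h), sub_self, mul_zero]
    · have := (weightedTotalDegree_sub_le _ _ _).trans
        (max_le ((weightedTotalDegree_mul_le _ lam f).trans (Nat.add_le_add_left hfdeg _)) hψdeg)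
      omega
  have := hGP P hP
  rw [hG0, map_zero, eq_comm, mul_eq_zero] at this
  exact this.resolve_right (sub_ne_zero.2 hrP.symm)

end KeyEquation

lemma exists_eq_C_mul_of_minimal (hq : 0 < q) {Λ lam : MvPolynomial (Fin 2) F} (hlam0 : lam ≠ 0)
    (hΛy : ∀ d ∈ Λ.support, d 1 < q) (hlamy : ∀ d ∈ lam.support, d 1 < q)
    (hlc : (hermitianOrder q).leadingCoeff Λ = 1)
    (hdeg : weightedTotalDegree ![q, q + 1] lam = weightedTotalDegree ![q, q + 1] Λ)
    (hmin : ∀ γ : F, lam - C γ * Λ ≠ 0 → (∀ d ∈ (lam - C γ * Λ).support, d 1 < q) →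
      weightedTotalDegree ![q, q + 1] Λ ≤ weightedTotalDegree ![q, q + 1] (lam - C γ * Λ)) :
    ∃ γ : F, γ ≠ 0 ∧ lam = C γ * Λ := by
  set m := hermitianOrder q
  have hΛ0 : Λ ≠ 0 := fun h => by simp [h] at hlc
  have hdeg' : m.degree lam = m.degree Λ :=
    eq_of_weight_eq hq (hlamy _ (m.degree_mem_support hlam0)) (hΛy _ (m.degree_mem_support hΛ0))
      (by rw [weight_degree, weight_degree, hdeg])
  set γ := m.leadingCoeff lam
  refine ⟨γ, m.leadingCoeff_ne_zero_iff.2 hlam0, not_not.1 fun hne => ?_⟩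
  set D := lam - C γ * Λ
  have hD0 : D ≠ 0 := sub_ne_zero.2 hne
  have hDy : ∀ d ∈ D.support, d 1 < q := fun d hd => by
    rcases mem_union.1 (support_sub _ _ _ hd) with hd | hd
    · exact hlamy d hd
    · rw [C_mul'] at hd
      exact hΛy d (support_smul hd)
  have hlt : m.degree D ≺[m] m.degree lam := by
    refine lt_of_le_of_ne (m.degree_sub_le.trans (sup_le le_rfl ?_)) fun h => ?_
    · exact m.degree_mul_le.trans (by rw [m.degree_C, zero_add, hdeg'])
    · have hc := m.coeff_degree_ne_zero_iff.2 hD0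
      have hΛc : coeff (m.degree lam) Λ = 1 := by rw [hdeg']; exact hlc
      rw [m.toSyn.injective h, coeff_sub, coeff_C_mul, hΛc, mul_one] at hc
      exact hc (sub_self γ)
  have := weight_lt_of_lt hq (hDy _ (m.degree_mem_support hD0))
    (hlamy _ (m.degree_mem_support hlam0)) hlt
  rw [weight_degree, weight_degree, hdeg] at this
  exact (hmin γ hD0 hDy).not_gt this

end Hermitian

open Hermitian

theorem stmt_10_general (p e : ℕ) (hp : p.Prime) (q : ℕ) (hq : q = p ^ e)
    (F : Type) [Field F] [Fintype F] (hF : Fintype.card F = q ^ 2)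
    (m : ℕ) (f : MvPolynomial (Fin 2) F)
    (hfdeg : MvPolynomial.weightedTotalDegree ![q, q + 1] f ≤ m)
    (r : F × F → F) (E : Set (F × F))
    (hE : E = {P : F × F | P.2 ^ q + P.2 = P.1 ^ (q + 1) ∧
      r P ≠ MvPolynomial.eval ![P.1, P.2] f})
    (hErrs : 2 * E.ncard + m + q * (q - 1) / 2 < q ^ 3)
    (R : MvPolynomial (Fin 2) F)
    (hR : ∀ α β : F, β ^ q + β = α ^ (q + 1) →
      MvPolynomial.eval ![α, β] R = r (α, β))
    (Λ : MvPolynomial (Fin 2) F) (hΛ0 : Λ ≠ 0)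
    (hΛy : MvPolynomial.degreeOf 1 Λ ≤ q - 1)
    (hΛvan : ∀ P ∈ E, MvPolynomial.eval ![P.1, P.2] Λ = 0)
    (hΛmin : ∀ μ : MvPolynomial (Fin 2) F, μ ≠ 0 →
      MvPolynomial.degreeOf 1 μ ≤ q - 1 →
      (∀ P ∈ E, MvPolynomial.eval ![P.1, P.2] μ = 0) →
      MvPolynomial.weightedTotalDegree ![q, q + 1] Λ ≤
        MvPolynomial.weightedTotalDegree ![q, q + 1] μ)
    (hΛlc : ∀ d ∈ Λ.support, q * d 0 + (q + 1) * d 1 =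
      MvPolynomial.weightedTotalDegree ![q, q + 1] Λ → Λ.coeff d = 1)
    (lam ψ : MvPolynomial (Fin 2) F) (hlam0 : lam ≠ 0)
    (hlamy : MvPolynomial.degreeOf 1 lam ≤ q - 1)
    (hlamdeg : MvPolynomial.weightedTotalDegree ![q, q + 1] lam ≤
      MvPolynomial.weightedTotalDegree ![q, q + 1] Λ)
    (hψdeg : MvPolynomial.weightedTotalDegree ![q, q + 1] ψ ≤
      MvPolynomial.weightedTotalDegree ![q, q + 1] lam + m)
    (hkey : lam * R - ψ ∈ Ideal.span {(X 0 : MvPolynomial (Fin 2) F) ^ (q ^ 2) - X 0,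
      (X 1 : MvPolynomial (Fin 2) F) ^ q + X 1 - (X 0) ^ (q + 1)}) :
    ∃ γ : F, γ ≠ 0 ∧ lam = MvPolynomial.C γ * Λ := by
  classical
  have hq2 := two_le_of_card_eq_sq hF
  have hy : ∀ μ : MvPolynomial (Fin 2) F,
      degreeOf 1 μ ≤ q - 1 ↔ ∀ d ∈ μ.support, d 1 < q :=
    fun μ => degreeOf_le_iff.trans (forall₂_congr fun d _ => by omega)
  set Err : Finset (F × F) := {P ∈ hermitianCurve F q | r P ≠ eval ![P.1, P.2] f}
  have hErr : E = Err := by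
    ext P
    simp [hE, Err]
  rw [hErr, Set.ncard_coe_finset] at hErrs
  obtain ⟨μ, hμ0, hμy, hμdeg, hμE⟩ := exists_ne_zero_eval_eq_zero (by omega : 0 < q) Err
  have hΛdeg := (hΛmin μ hμ0 ((hy μ).2 hμy) (hErr ▸ hμE)).trans hμdeg
  have hvan : ∀ P ∈ E, eval ![P.1, P.2] lam = 0 := fun P hP => by
    obtain ⟨hPc, hPr⟩ := mem_filter.1 (hErr ▸ hP)
    exact eval_eq_zero_of_ne hp hq hF hfdeg (fun P hP => hR _ _ (mem_hermitianCurve.1 hP))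
      hψdeg hkey (S := Err) (fun P hP h => mem_filter.2 ⟨hP, h⟩) (by omega) hPc hPr
  have hlc : (hermitianOrder q).leadingCoeff Λ = 1 :=
    hΛlc _ ((hermitianOrder q).degree_mem_support hΛ0)
      (by rw [← Finsupp.weight_fin_two, weight_degree])
  refine exists_eq_C_mul_of_minimal (by omega) hlam0 ((hy Λ).1 hΛy) ((hy lam).1 hlamy) hlc
    (le_antisymm hlamdeg (hΛmin lam hlam0 hlamy hvan))
    fun γ hne hγy => hΛmin _ hne ((hy _).2 hγy) fun P hP => ?_
  simp [hvan P hP, hΛvan P hP]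

/-- Uniqueness of the error locator found by solving the (first) key equation, when the
number of errors is below `(q³ - m - g)/2`.  Here `F` is the field with `q²` elements,
`q = p^e`, the Hermitian curve is `β^q + β = α^(q+1)` with genus `g = q(q-1)/2`, and
`deg_{q,q+1}` denotes the `(q, q+1)`-weighted degree.  `Λ` is the nonzero polynomial with
`y`-degree at most `q-1`, vanishing on the error set `E`, of minimal weighted degree and
with leading coefficient `1`.  Any solution `(λ, ψ)` of the key equation with
`deg_{q,q+1} λ ≤ deg_{q,q+1} Λ` and `deg_{q,q+1} ψ ≤ deg_{q,q+1} λ + m` satisfies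
`λ = γ·Λ` for a nonzero constant `γ`. -/
theorem stmt_10 (p e : ℕ) (hp : p.Prime) (he : 0 < e) (q : ℕ) (hq : q = p ^ e)
    (F : Type) [Field F] [Fintype F] (hF : Fintype.card F = q ^ 2)
    (m : ℕ) (f : MvPolynomial (Fin 2) F)
    (hfy : MvPolynomial.degreeOf 1 f ≤ q - 1)
    (hfdeg : MvPolynomial.weightedTotalDegree ![q, q + 1] f ≤ m)
    (r : F × F → F) (E : Set (F × F))
    (hE : E = {P : F × F | P.2 ^ q + P.2 = P.1 ^ (q + 1) ∧
      r P ≠ MvPolynomial.eval ![P.1, P.2] f})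
    (hErrs : 2 * E.ncard + m + q * (q - 1) / 2 < q ^ 3)
    (R : MvPolynomial (Fin 2) F)
    (hR : ∀ α β : F, β ^ q + β = α ^ (q + 1) →
      MvPolynomial.eval ![α, β] R = r (α, β))
    (Λ : MvPolynomial (Fin 2) F) (hΛ0 : Λ ≠ 0)
    (hΛy : MvPolynomial.degreeOf 1 Λ ≤ q - 1)
    (hΛvan : ∀ P ∈ E, MvPolynomial.eval ![P.1, P.2] Λ = 0)
    (hΛmin : ∀ μ : MvPolynomial (Fin 2) F, μ ≠ 0 →
      MvPolynomial.degreeOf 1 μ ≤ q - 1 →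
      (∀ P ∈ E, MvPolynomial.eval ![P.1, P.2] μ = 0) →
      MvPolynomial.weightedTotalDegree ![q, q + 1] Λ ≤
        MvPolynomial.weightedTotalDegree ![q, q + 1] μ)
    (hΛlc : ∀ d ∈ Λ.support, q * d 0 + (q + 1) * d 1 =
      MvPolynomial.weightedTotalDegree ![q, q + 1] Λ → Λ.coeff d = 1)
    (lam ψ : MvPolynomial (Fin 2) F) (hlam0 : lam ≠ 0)
    (hlamy : MvPolynomial.degreeOf 1 lam ≤ q - 1)
    (hψy : MvPolynomial.degreeOf 1 ψ ≤ q - 1)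
    (hlamdeg : MvPolynomial.weightedTotalDegree ![q, q + 1] lam ≤
      MvPolynomial.weightedTotalDegree ![q, q + 1] Λ)
    (hψdeg : MvPolynomial.weightedTotalDegree ![q, q + 1] ψ ≤
      MvPolynomial.weightedTotalDegree ![q, q + 1] lam + m)
    (hkey : lam * R - ψ ∈ Ideal.span {(X 0 : MvPolynomial (Fin 2) F) ^ (q ^ 2) - X 0,
      (X 1 : MvPolynomial (Fin 2) F) ^ q + X 1 - (X 0) ^ (q + 1)}) :
    ∃ γ : F, γ ≠ 0 ∧ lam = MvPolynomial.C γ * Λ :=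
  stmt_10_general p e hp q hq F hF m f hfdeg r E hE hErrs R hR Λ hΛ0 hΛy hΛvan hΛmin hΛlc lam ψ
    hlam0 hlamy hlamdeg hψdeg hkey
end

section
/- Let K be a field, let Q ∈ K[[φ]][z] be a polynomial in z with power series coefficients such that Q|_{φ=0} (the polynomial in K[z] obtained by taking the constant coefficient of each power series coefficient of Q) is nonzero, and let k be a positive integer. Let A = { h ∈ K[[φ]] : Q(h) ≡ 0 mod φ^k }. Then there exist an integer ℓ̂ with 0 ≤ ℓ̂ ≤ deg_z( Q|_{φ=0} ), power series h_1, …, h_ℓ̂ ∈ K[[φ]], and positive integers d_1, …, d_ℓ̂ such that the sets h_i + φ^{d_i}·K[[φ]] (i = 1, …, ℓ̂) are pairwise disjoint and their union equals A. -/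
/-!
Every `g` with `φ ^ k ∣ Q(g)` has constant term a root `a` of `Q₀ = Q|_{φ=0}`. Writing
`g = a + φ t`, one has `Q(a + φ t) = φ ^ m · R(t)` with `m ≥ 1` and `R|_{φ=0} ≠ 0` of degree at
most the multiplicity of `a` as a root of `Q₀`, so the roots of order `k` of `Q` with constant
term `a` are the image under `t ↦ a + φ t` of the roots of order `k - m` of `R`. Strong induction
on `k` then produces at most `mult_a Q₀` balls above each root `a`, hence at most `deg Q₀` in all.
-/

open Polynomial
open scoped PowerSeries

theorem pow_dvd_pow_mul_iff {M : Type*} [CommMonoidWithZero M] [IsCancelMulZero M] {x : M}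
    (hx : x ≠ 0) (k m : ℕ) (r : M) : x ^ k ∣ x ^ m * r ↔ x ^ (k - m) ∣ r := by
  rcases le_total k m with hkm | hmk
  · simpa [Nat.sub_eq_zero_of_le hkm] using (pow_dvd_pow x hkm).mul_right r
  · obtain ⟨j, rfl⟩ := Nat.exists_eq_add_of_le hmk
    rw [pow_add, Nat.add_sub_cancel_left, mul_dvd_mul_iff_left (pow_ne_zero m hx)]

theorem Polynomial.taylor_coeff_rootMultiplicity_ne_zero {R : Type*} [CommRing R] [IsDomain R]
    {p : R[X]} (hp : p ≠ 0) (a : R) : (taylor a p).coeff (p.rootMultiplicity a) ≠ 0 := by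
  rw [rootMultiplicity_eq_natTrailingDegree, ← taylor_apply]
  exact trailingCoeff_nonzero_iff_nonzero.2 (mt (taylor_eq_zero a p).1 hp)

theorem Polynomial.C_X_dvd_iff_map_constantCoeff_eq_zero {R : Type*} [CommRing R]
    (P : R⟦X⟧[X]) : C PowerSeries.X ∣ P ↔ P.map PowerSeries.constantCoeff = 0 := by
  simp only [C_dvd_iff_dvd_coeff, PowerSeries.X_dvd_iff, Polynomial.ext_iff, coeff_map,
    coeff_zero]

namespace XAdic

variable {K : Type*} [Field K]

local notation "φ" => (PowerSeries.X : K⟦X⟧)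

theorem exists_eq_C_X_pow_mul {P : K⟦X⟧[X]} (hP : P ≠ 0) :
    ∃ m R, P = C φ ^ m * R ∧ R.map PowerSeries.constantCoeff ≠ 0 := by
  have hX : ¬IsUnit (C φ) := Polynomial.isUnit_C.not.2 PowerSeries.X_prime.not_isUnit
  obtain ⟨R, hPR, hR⟩ := (FiniteMultiplicity.of_not_isUnit hX hP).exists_eq_pow_mul_and_not_dvd
  exact ⟨_, R, hPR, (C_X_dvd_iff_map_constantCoeff_eq_zero R).not.1 hR⟩

/- The coefficient of `z ^ j` in `Q(a + φ z)` is `φ ^ j` times the `j`-th Taylor coefficient of `Q`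
at `a`, and the one of index `mult_a Q₀` is a unit: this forces `m ≤ mult_a Q₀` and
`deg R₀ ≤ m`. -/
theorem exists_eval_C_add_X_mul_eq {Q : K⟦X⟧[X]} (hQ : Q.map PowerSeries.constantCoeff ≠ 0)
    {a : K} (ha : (Q.map PowerSeries.constantCoeff).IsRoot a) :
    ∃ (m : ℕ) (R : K⟦X⟧[X]), 0 < m ∧ R.map PowerSeries.constantCoeff ≠ 0 ∧
      (R.map PowerSeries.constantCoeff).natDegree ≤
        (Q.map PowerSeries.constantCoeff).rootMultiplicity a ∧
      ∀ t, Q.eval (PowerSeries.C a + φ * t) = φ ^ m * R.eval t := by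
  set Q₀ := Q.map PowerSeries.constantCoeff
  set T := taylor (PowerSeries.C a) Q
  have hT₀ : T.map PowerSeries.constantCoeff = taylor a Q₀ := by simp [T, Q₀, map_taylor]
  have hT_unit : IsUnit (T.coeff (Q₀.rootMultiplicity a)) := by
    rw [PowerSeries.isUnit_iff_constantCoeff, isUnit_iff_ne_zero, ← coeff_map, hT₀]
    exact taylor_coeff_rootMultiplicity_ne_zero hQ a
  have hT_zero : PowerSeries.constantCoeff (T.coeff 0) = 0 := by
    rw [← coeff_map, hT₀, taylor_coeff_zero]
    exact ha
  set S := T.comp (C φ * X)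
  have hS : ∀ j, S.coeff j = T.coeff j * φ ^ j := fun j => comp_C_mul_X_coeff
  have hS_ne : S ≠ 0 := fun h => by
    simpa [hS, hT_unit.ne_zero] using congrArg (coeff · (Q₀.rootMultiplicity a)) h
  obtain ⟨m, R, hSR, hR⟩ := exists_eq_C_X_pow_mul hS_ne
  have hcoeff : ∀ j, T.coeff j * φ ^ j = φ ^ m * R.coeff j := by
    intro j
    rw [← hS, hSR, ← C_pow, coeff_C_mul]
  refine ⟨m, R, Nat.pos_of_ne_zero fun hm => hR ?_, hR, ?_, fun t => ?_⟩
  · have hCS : C φ ∣ S := by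
      refine (C_dvd_iff_dvd_coeff _ _).2 fun j => ?_
      rcases j with _ | j
      · simpa [hS] using PowerSeries.X_dvd_iff.2 hT_zero
      · exact (hS _).symm ▸ dvd_mul_of_dvd_right (dvd_pow_self _ j.succ_ne_zero) _
    rw [← C_X_dvd_iff_map_constantCoeff_eq_zero, ← one_mul R, ← pow_zero (C φ), ← hm, ← hSR]
    exact hCS
  · have hm_le : m ≤ Q₀.rootMultiplicity a := by
      have h : φ ^ m ∣ T.coeff (Q₀.rootMultiplicity a) * φ ^ Q₀.rootMultiplicity a :=
        (hcoeff _).symm ▸ dvd_mul_right _ _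
      rw [hT_unit.dvd_mul_left] at h
      exact (pow_dvd_pow_iff PowerSeries.X_ne_zero PowerSeries.X_prime.not_isUnit).1 h
    refine le_trans (natDegree_le_iff_coeff_eq_zero.2 fun j hj => ?_) hm_le
    have h : φ ^ j ∣ φ ^ m * R.coeff j := hcoeff j ▸ dvd_mul_left _ _
    rw [pow_dvd_pow_mul_iff PowerSeries.X_ne_zero] at h
    rw [coeff_map, ← PowerSeries.X_dvd_iff]
    exact (dvd_pow_self _ (by omega)).trans h
  · have h := congrArg (eval t) hSR
    simp only [S, T, eval_comp, taylor_eval, eval_mul, eval_C, eval_X, eval_pow] at h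
    rwa [add_comm] at h

theorem exists_C_add_X_mul_eq_iff {g : K⟦X⟧} {a : K} :
    (∃ t, PowerSeries.C a + φ * t = g) ↔ PowerSeries.constantCoeff g = a := by
  constructor
  · rintro ⟨t, rfl⟩
    simp
  · intro hg
    obtain ⟨t, ht⟩ := PowerSeries.X_dvd_iff.2 (show PowerSeries.constantCoeff (g - .C a) = 0 by
      simp [hg])
    exact ⟨t, by rw [← ht]; ring⟩

theorem setOf_dvd_eval_and_constantCoeff_eq {Q R : K⟦X⟧[X]} {a : K} {m : ℕ}
    (hQR : ∀ t, Q.eval (PowerSeries.C a + φ * t) = φ ^ m * R.eval t) (k : ℕ) :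
    {g | φ ^ k ∣ Q.eval g ∧ PowerSeries.constantCoeff g = a} =
      (fun t => PowerSeries.C a + φ * t) '' {t | φ ^ (k - m) ∣ R.eval t} := by
  ext g
  simp only [Set.mem_ofPred_eq, Set.mem_image, ← exists_C_add_X_mul_eq_iff]
  constructor
  · rintro ⟨hg, t, rfl⟩
    exact ⟨t, (pow_dvd_pow_mul_iff PowerSeries.X_ne_zero _ _ _).1 (hQR t ▸ hg), rfl⟩
  · rintro ⟨t, ht, rfl⟩
    exact ⟨hQR t ▸ (pow_dvd_pow_mul_iff PowerSeries.X_ne_zero _ _ _).2 ht, t, rfl⟩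

def ball (p : K⟦X⟧ × ℕ) : Set K⟦X⟧ :=
  {g | φ ^ p.2 ∣ g - p.1}

theorem ball_zero_zero : ball ((0, 0) : K⟦X⟧ × ℕ) = Set.univ := by
  simp [ball]

theorem image_C_add_X_mul_ball (a : K) (p : K⟦X⟧ × ℕ) :
    (fun t => PowerSeries.C a + φ * t) '' ball p = ball (PowerSeries.C a + φ * p.1, p.2 + 1) := by
  ext g
  constructor
  · rintro ⟨t, ⟨u, hu⟩, rfl⟩
    exact ⟨u, by simp only; linear_combination φ * hu⟩
  · rintro ⟨u, hu⟩
    refine ⟨p.1 + φ ^ p.2 * u, ⟨u, by ring⟩, ?_⟩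
    simp only at hu ⊢
    linear_combination -hu

def IsDisjointBallUnion (n : ℕ) (S : Set K⟦X⟧) : Prop :=
  ∃ B : Finset (K⟦X⟧ × ℕ), B.card ≤ n ∧ (∀ p ∈ B, 0 < p.2) ∧
    (B : Set (K⟦X⟧ × ℕ)).PairwiseDisjoint ball ∧ ⋃ p ∈ B, ball p = S

namespace IsDisjointBallUnion

variable {n n' : ℕ} {S : Set K⟦X⟧}

theorem mono (h : IsDisjointBallUnion n S) (hn : n ≤ n') : IsDisjointBallUnion n' S := by
  obtain ⟨B, hB, hB'⟩ := h
  exact ⟨B, hB.trans hn, hB'⟩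

theorem of_ball {p : K⟦X⟧ × ℕ} (hp : 0 < p.2) : IsDisjointBallUnion 1 (ball p) :=
  ⟨{p}, by simp, by simpa using hp, by simp, by simp⟩

theorem image_C_add_X_mul (h : IsDisjointBallUnion n S) (a : K) :
    IsDisjointBallUnion n ((fun t => PowerSeries.C a + φ * t) '' S) := by
  classical
  obtain ⟨B, hcard, hpos, hdisj, rfl⟩ := h
  set F : K⟦X⟧ × ℕ → K⟦X⟧ × ℕ := fun p => (PowerSeries.C a + φ * p.1, p.2 + 1)
  have hball : ∀ p, ball (F p) = (fun t => PowerSeries.C a + φ * t) '' ball p := fun p =>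
    (image_C_add_X_mul_ball a p).symm
  have hinj : Function.Injective fun t : K⟦X⟧ => PowerSeries.C a + φ * t := fun s t hst =>
    mul_left_cancel₀ PowerSeries.X_ne_zero (add_left_cancel hst)
  refine ⟨B.image F, Finset.card_image_le.trans hcard, ?_, ?_, ?_⟩
  · simp only [Finset.mem_image]
    rintro _ ⟨p, -, rfl⟩
    exact Nat.succ_pos _
  · rw [Finset.coe_image]
    rintro _ ⟨p, hp, rfl⟩ _ ⟨q, hq, rfl⟩ hpq
    rw [Function.onFun, hball, hball, Set.disjoint_image_iff hinj]
    exact hdisj hp hq (ne_of_apply_ne F hpq)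
  · rw [Finset.set_biUnion_finset_image, Set.image_iUnion₂]
    simp only [hball]

theorem biUnion {ι : Type*} {s : Finset ι} {n : ι → ℕ} {S : ι → Set K⟦X⟧}
    (hS : (s : Set ι).PairwiseDisjoint S) (h : ∀ i ∈ s, IsDisjointBallUnion (n i) (S i)) :
    IsDisjointBallUnion (∑ i ∈ s, n i) (⋃ i ∈ s, S i) := by
  classical
  choose! B hcard hpos hdisj hunion using h
  refine ⟨s.biUnion B, Finset.card_biUnion_le.trans (Finset.sum_le_sum hcard), ?_, ?_, ?_⟩
  · simp only [Finset.mem_biUnion]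
    rintro p ⟨i, hi, hp⟩
    exact hpos i hi p hp
  · rw [Finset.coe_biUnion]
    refine Set.PairwiseDisjoint.biUnion (hS.mono_on fun i hi => ?_) hdisj
    simp only [Set.iSup_eq_iUnion, Finset.mem_coe]
    exact (hunion i hi).le
  · rw [Finset.set_biUnion_biUnion]
    exact Set.iUnion₂_congr hunion

theorem exists_fin (h : IsDisjointBallUnion n S) :
    ∃ L ≤ n, ∃ (c : Fin L → K⟦X⟧) (d : Fin L → ℕ), (∀ i, 0 < d i) ∧
      (∀ i j, i ≠ j → ball (c i, d i) ∩ ball (c j, d j) = ∅) ∧ ⋃ i, ball (c i, d i) = S := by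
  obtain ⟨B, hcard, hpos, hdisj, rfl⟩ := h
  set e := B.equivFin.symm
  refine ⟨B.card, hcard, fun i => (e i).1.1, fun i => (e i).1.2, fun i => hpos _ (e i).2,
    fun i j hij => ?_, ?_⟩
  · exact Set.disjoint_iff_inter_eq_empty.1 <|
      hdisj (e i).2 (e j).2 fun h => hij (e.injective (Subtype.ext h))
  · rw [e.surjective.iUnion_comp (fun p => ball p.1), Set.iUnion_subtype]

end IsDisjointBallUnion

theorem setOf_X_pow_dvd_eval_eq_biUnion [DecidableEq K] {k : ℕ} (hk : 0 < k) {Q : K⟦X⟧[X]}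
    (hQ : Q.map PowerSeries.constantCoeff ≠ 0) :
    {g | φ ^ k ∣ Q.eval g} = ⋃ a ∈ (Q.map PowerSeries.constantCoeff).roots.toFinset,
      {g | φ ^ k ∣ Q.eval g ∧ PowerSeries.constantCoeff g = a} := by
  ext g
  simp only [Set.mem_ofPred_eq, Set.mem_iUnion, Multiset.mem_toFinset, mem_roots hQ,
    exists_prop]
  refine ⟨fun hg => ⟨_, ?_, hg, rfl⟩, fun ⟨_, _, hg, _⟩ => hg⟩
  have h : PowerSeries.constantCoeff (Q.eval g) = 0 :=
    PowerSeries.X_dvd_iff.1 ((dvd_pow_self _ hk.ne').trans hg)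
  rwa [← eval_map_apply] at h

theorem isDisjointBallUnion_setOf_X_pow_dvd_eval {k : ℕ} (hk : 0 < k) {Q : K⟦X⟧[X]}
    (hQ : Q.map PowerSeries.constantCoeff ≠ 0) :
    IsDisjointBallUnion (Q.map PowerSeries.constantCoeff).natDegree {g | φ ^ k ∣ Q.eval g} := by
  classical
  induction k using Nat.strong_induction_on generalizing Q with
  | _ k ih =>
  set Q₀ := Q.map PowerSeries.constantCoeff
  have hfiber : ∀ a ∈ Q₀.roots.toFinset, IsDisjointBallUnion (Q₀.rootMultiplicity a)
      {g | φ ^ k ∣ Q.eval g ∧ PowerSeries.constantCoeff g = a} := by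
    intro a ha
    have ha : Q₀.IsRoot a := (mem_roots hQ).1 (Multiset.mem_toFinset.1 ha)
    obtain ⟨m, R, hm, hR, hdeg, hQR⟩ := exists_eval_C_add_X_mul_eq hQ ha
    rw [setOf_dvd_eval_and_constantCoeff_eq hQR]
    rcases le_or_gt k m with hkm | hmk
    · simp only [Nat.sub_eq_zero_of_le hkm, pow_zero, one_dvd, Set.ofPred_true]
      rw [← ball_zero_zero, image_C_add_X_mul_ball]
      exact (IsDisjointBallUnion.of_ball Nat.one_pos).mono ((rootMultiplicity_pos hQ).2 ha)
    · exact ((ih (k - m) (by omega) (by omega) hR).image_C_add_X_mul a).mono hdeg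
  rw [setOf_X_pow_dvd_eval_eq_biUnion hk hQ]
  refine (IsDisjointBallUnion.biUnion ?_ hfiber).mono ?_
  · intro a _ b _ hab
    exact Set.disjoint_left.2 fun g hga hgb => hab (hga.2.symm.trans hgb.2)
  · calc ∑ a ∈ Q₀.roots.toFinset, Q₀.rootMultiplicity a
        = ∑ a ∈ Q₀.roots.toFinset, Q₀.roots.count a := by simp only [count_roots]
      _ = Multiset.card Q₀.roots := Multiset.toFinset_sum_count_eq _
      _ ≤ Q₀.natDegree := card_roots' Q₀

end XAdic

/-- Structure of the set of roots of order `k`: let `K` be a field, `Q ∈ K[[φ]][z]` with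
`Q|_{φ=0} ≠ 0`, and `k ≥ 1`.  Then the set `A = {h ∈ K[[φ]] : φ^k ∣ Q(h)}` is the
disjoint union of at most `deg_z (Q|_{φ=0})` sets of the form `h_i + φ^{d_i}·K[[φ]]` with
`d_i ≥ 1`. -/
theorem stmt_15 {K : Type} [Field K] (Q : Polynomial (PowerSeries K))
    (hQ : Q.map (PowerSeries.constantCoeff (R := K)) ≠ 0) (k : ℕ) (hk : 0 < k) :
    ∃ (L : ℕ), L ≤ (Q.map (PowerSeries.constantCoeff (R := K))).natDegree ∧
      ∃ (h : Fin L → PowerSeries K) (d : Fin L → ℕ),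
        (∀ i, 0 < d i) ∧
        (∀ i j, i ≠ j →
          {g : PowerSeries K | (PowerSeries.X : PowerSeries K) ^ d i ∣ g - h i} ∩
            {g : PowerSeries K | (PowerSeries.X : PowerSeries K) ^ d j ∣ g - h j} = ∅) ∧
        (⋃ i, {g : PowerSeries K | (PowerSeries.X : PowerSeries K) ^ d i ∣ g - h i}) =
          {g : PowerSeries K | (PowerSeries.X : PowerSeries K) ^ k ∣ Polynomial.eval g Q} :=
  (XAdic.isDisjointBallUnion_setOf_X_pow_dvd_eval hk hQ).exists_fin
end

section
/- For all nonnegative integers i and j and every nonnegative integer N with N ≤ q³, the number of exponents n < N for which the coefficient of X^n in the power series X^i · Y^j ∈ F[[X]] is nonzero is at most q. -/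
/-!
Modulo `X^{(q+1)q²}` the series `Y` is `X^{q+1} - X^{(q+1)q} = X^{q+1}(1 - X^{q²-1})`, and `q³` lies
below that precision. Hence, for `n < q³`, the coefficient of `X^n` in `X^i Y^j` is that of
`X^{i+(q+1)j} (1 - X^{q²-1})^j`, which vanishes unless `n = i + (q+1)j + (q²-1)b` with `b ≤ j`.
Such an `n` is below `q³` only if `b < q`, which leaves at most `q` exponents.
-/

/-- The formal power series `Y = Σ_{b=0}^∞ (-1)^b X^{(q+1)q^b}` in `F[[X]]`. -/
noncomputable def Yser (q : ℕ) (F : Type) [Field F] : PowerSeries F :=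
  PowerSeries.mk fun n =>
    ∑ b ∈ Finset.range (n + 1), if n = (q + 1) * q ^ b then (-1 : F) ^ b else 0

open PowerSeries Finset

namespace PowerSeries

variable {R : Type*} [CommRing R]

theorem coeff_X_pow_mul_pow_eq_of_X_pow_dvd_sub {K : ℕ} {φ ψ : R⟦X⟧} (h : X ^ K ∣ φ - ψ)
    (i j : ℕ) {n : ℕ} (hn : n < K) : coeff n (X ^ i * φ ^ j) = coeff n (X ^ i * ψ ^ j) := by
  have hdvd : X ^ K ∣ X ^ i * φ ^ j - X ^ i * ψ ^ j := by
    rw [← mul_sub]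
    exact (h.trans (sub_dvd_pow_sub_pow φ ψ j)).mul_left _
  rw [← sub_eq_zero, ← map_sub]
  exact X_pow_dvd_iff.1 hdvd n hn

theorem exists_le_eq_of_coeff_X_pow_mul_X_pow_sub_X_pow_pow_ne_zero {i a d j n : ℕ}
    (h : coeff n (X ^ i * ((X : R⟦X⟧) ^ a - X ^ (a + d)) ^ j) ≠ 0) :
    ∃ b ≤ j, n = i + a * j + d * b := by
  induction j generalizing i n with
  | zero =>
    rw [pow_zero, mul_one, coeff_X_pow] at h
    exact ⟨0, le_rfl, by simpa using (ite_ne_right_iff.1 h).1⟩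
  | succ j ih =>
    have hsplit : X ^ i * ((X : R⟦X⟧) ^ a - X ^ (a + d)) ^ (j + 1) =
        X ^ (i + a) * (X ^ a - X ^ (a + d)) ^ j - X ^ (i + a + d) * (X ^ a - X ^ (a + d)) ^ j := by
      ring
    rw [hsplit, map_sub] at h
    by_cases hfirst : coeff n (X ^ (i + a) * ((X : R⟦X⟧) ^ a - X ^ (a + d)) ^ j) = 0
    · rw [hfirst, zero_sub, neg_ne_zero] at h
      obtain ⟨b, hb, rfl⟩ := ih h
      exact ⟨b + 1, by omega, by ring⟩
    · obtain ⟨b, hb, rfl⟩ := ih hfirst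
      exact ⟨b, by omega, by ring⟩

end PowerSeries

theorem coeff_Yser_of_lt {q : ℕ} (hq : 2 ≤ q) (F : Type) [Field F] {m : ℕ}
    (hm : m < (q + 1) * q ^ 2) :
    coeff m (Yser q F) = coeff m ((X : F⟦X⟧) ^ (q + 1) - X ^ ((q + 1) * q)) := by
  set f : ℕ → F := fun b => if m = (q + 1) * q ^ b then (-1 : F) ^ b else 0
  have hf_ge_two : ∀ b ≥ 2, f b = 0 := fun b hb => if_neg fun h => by
    have : q ^ 2 ≤ q ^ b := Nat.pow_le_pow_right (by omega) hb
    nlinarith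
  have hf_gt : ∀ b ≥ m + 1, f b = 0 := fun b hb => if_neg fun h => by
    have : b < q ^ b := Nat.lt_pow_self (by omega)
    nlinarith
  calc coeff m (Yser q F) = ∑ b ∈ range (m + 1), f b := coeff_mk _ _
    _ = ∑ b ∈ range (m + 2), f b := (eventually_constant_sum hf_gt (by omega)).symm
    _ = ∑ b ∈ range 2, f b := eventually_constant_sum hf_ge_two (by omega)
    _ = _ := by
      simp only [f, sum_range_succ, sum_range_zero, map_sub, coeff_X_pow, pow_zero, pow_one,
        mul_one, zero_add]
      split_ifs <;> ring

theorem X_pow_dvd_Yser_sub {q : ℕ} (hq : 2 ≤ q) (F : Type) [Field F] :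
    X ^ ((q + 1) * q ^ 2) ∣ Yser q F - (X ^ (q + 1) - X ^ ((q + 1) * q)) :=
  X_pow_dvd_iff.2 fun m hm => by rw [map_sub, coeff_Yser_of_lt hq F hm, sub_self]

theorem stmt_16_general (p e : ℕ) (hp : p.Prime) (he : 0 < e) (q : ℕ) (hq : q = p ^ e)
    (F : Type) [Field F]
    (i j N : ℕ) (hN : N ≤ q ^ 3) :
    Set.ncard {n : ℕ | n < N ∧
      PowerSeries.coeff (R := F) n ((PowerSeries.X : PowerSeries F) ^ i * Yser q F ^ j) ≠ 0} ≤ q := by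
  have hq2 : 2 ≤ q := hq ▸ Nat.one_lt_pow he.ne' hp.one_lt
  have hsplit : (q + 1) * q = (q + 1) + (q ^ 2 - 1) := by
    have : 1 ≤ q ^ 2 := Nat.one_le_pow _ _ (by omega)
    zify [this]
    ring
  have hsub : {n : ℕ | n < N ∧ coeff n ((X : F⟦X⟧) ^ i * Yser q F ^ j) ≠ 0} ⊆
      ↑((range q).image fun b => i + (q + 1) * j + (q ^ 2 - 1) * b) := by
    rintro n ⟨hnN, hne⟩
    have hn : n < (q + 1) * q ^ 2 := by nlinarith
    rw [coeff_X_pow_mul_pow_eq_of_X_pow_dvd_sub (X_pow_dvd_Yser_sub hq2 F) i j hn, hsplit] at hne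
    obtain ⟨b, hbj, rfl⟩ := exists_le_eq_of_coeff_X_pow_mul_X_pow_sub_X_pow_pow_ne_zero hne
    have hb : b < q := by
      by_contra! hqb
      nlinarith [Nat.mul_le_mul_left (q ^ 2 - 1) hqb, Nat.mul_le_mul_left (q + 1) (hqb.trans hbj)]
    exact mem_image.2 ⟨b, mem_range.2 hb, rfl⟩
  calc _ ≤ ((range q).image fun b => i + (q + 1) * j + (q ^ 2 - 1) * b).card := by
        simpa only [Set.ncard_coe_finset] using Set.ncard_le_ncard hsub (finite_toSet _)
    _ ≤ q := card_image_le.trans (card_range q).le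

/-- Let `F` be the field with `q²` elements, `q = p^e`.  For all nonnegative integers `i`,
`j` and every `N ≤ q³`, the number of exponents `n < N` for which the coefficient of `X^n`
in the power series `X^i · Y^j` is nonzero is at most `q`. -/
theorem stmt_16 (p e : ℕ) (hp : p.Prime) (he : 0 < e) (q : ℕ) (hq : q = p ^ e)
    (F : Type) [Field F] [Fintype F] (hF : Fintype.card F = q ^ 2)
    (i j N : ℕ) (hN : N ≤ q ^ 3) :
    Set.ncard {n : ℕ | n < N ∧
      PowerSeries.coeff (R := F) n ((PowerSeries.X : PowerSeries F) ^ i * Yser q F ^ j) ≠ 0} ≤ q :=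
  stmt_16_general p e hp he q hq F i j N hN
end

section
/- Let m be a nonnegative integer with m ≤ q³ and let j be a nonnegative integer with (q+1)·j ≤ m. Then there exists a polynomial p ∈ F[x, y] with deg_y p ≤ q − 1 such that y^j − p lies in the ideal of F[x, y] generated by y^q + y − x^{q+1}, p has at most q + 1 nonzero monomials, and every monomial x^a y^b occurring in p satisfies q·a + (q+1)·b ≤ (q+1)·j. -/
open MvPolynomial Finset

section Aux

variable {F : Type} [CommRing F]

/-- exponent vector `x^a y^b` -/
noncomputable def D2 (a b : ℕ) : Fin 2 →₀ ℕ := Finsupp.single 0 a + Finsupp.single 1 b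

lemma D2_apply0 (a b : ℕ) : D2 a b 0 = a := by
  simp [D2, Finsupp.single_apply]

lemma D2_apply1 (a b : ℕ) : D2 a b 1 = b := by
  simp [D2, Finsupp.single_apply]

lemma monoD2 (a b : ℕ) (c : F) :
    (monomial (D2 a b) c : MvPolynomial (Fin 2) F) = C c * X 0 ^ a * X 1 ^ b := by
  rw [D2, monomial_single_add, ← C_mul_X_pow_eq_monomial]
  ring

lemma wt1 (q s r i : ℕ) (hq : 1 ≤ q) (hi : i ≤ s) :
    q * ((q+1)*(s-i)) + (q+1)*(r+i) ≤ (q+1) * (q*s+r) := by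
  have h1 : (i : ℤ) ≤ (q : ℤ) * i := by
    exact_mod_cast Nat.le_mul_of_pos_left i hq
  zify [hi]
  nlinarith [h1]

lemma wt2 (q s r k : ℕ) (hq : 1 ≤ q) (hk : k ≤ s + 1) (hrk : q ≤ r + k) :
    q * ((q+1)*(s+1-k)) + (q+1)*(r+k-q) ≤ (q+1) * (q*s+r) := by
  have h1 : (k : ℤ) ≤ (q : ℤ) * k := by
    exact_mod_cast Nat.le_mul_of_pos_left k hq
  zify [hk, hrk]
  nlinarith [h1]

lemma D2_congr {a b a' b' : ℕ} (h1 : a = a') (h2 : b = b') : D2 a b = D2 a' b' := by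
  rw [h1, h2]

lemma D2_add (a b a' b' : ℕ) : D2 a b + D2 a' b' = D2 (a + a') (b + b') := by
  rw [D2, D2, D2, add_add_add_comm, ← Finsupp.single_add, ← Finsupp.single_add]

end Aux

/-- Let `F` be the field with `q²` elements, `q = p^e`.  Let `m ≤ q³` and let `j` satisfy
`(q+1)·j ≤ m`.  Then there is a polynomial `f ∈ F[x,y]` with `deg_y f ≤ q - 1` such that
`y^j - f` lies in the ideal generated by `y^q + y - x^(q+1)`, `f` has at most `q + 1`
nonzero monomials, and every monomial `x^a y^b` of `f` satisfies
`q·a + (q+1)·b ≤ (q+1)·j`. -/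
theorem stmt_18 (p e : ℕ) (hp : p.Prime) (he : 0 < e) (q : ℕ) (hq : q = p ^ e)
    (F : Type) [Field F] [Fintype F] (hF : Fintype.card F = q ^ 2)
    (m j : ℕ) (hm : m ≤ q ^ 3) (hj : (q + 1) * j ≤ m) :
    ∃ f : MvPolynomial (Fin 2) F,
      MvPolynomial.degreeOf 1 f ≤ q - 1 ∧
      (X 1 : MvPolynomial (Fin 2) F) ^ j - f ∈
        Ideal.span {(X 1 : MvPolynomial (Fin 2) F) ^ q + X 1 - (X 0) ^ (q + 1)} ∧
      f.support.card ≤ q + 1 ∧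
      ∀ d ∈ f.support, q * d 0 + (q + 1) * d 1 ≤ (q + 1) * j := by
  have hq2 : 2 ≤ q := by
    rw [hq]
    calc 2 = 2 ^ 1 := rfl
    _ ≤ p ^ 1 := Nat.pow_le_pow_left hp.two_le 1
    _ ≤ p ^ e := Nat.pow_le_pow_right (by have := hp.two_le; omega) he
  set R := MvPolynomial (Fin 2) F
  set x : R := X 0 with hx
  set y : R := X 1 with hy
  set g : R := y ^ q + y - x ^ (q + 1) with hg
  set s := j / q with hs
  set r := j % q with hr
  have hj' : q * s + r = j := Nat.div_add_mod j q
  have hrq : r < q := Nat.mod_lt _ (by omega)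
  -- s ≤ q - 1
  have hjq3 : (q + 1) * j ≤ q ^ 3 := hj.trans hm
  have hqs : q * s ≤ j := by omega
  clear_value s r
  have hsq : s ≤ q - 1 := by
    by_contra hc
    push_neg at hc
    have h1 : q ≤ s := by omega
    have h2 : (q + 1) * (q * q) ≤ (q + 1) * (q * s) :=
      Nat.mul_le_mul_left _ (Nat.mul_le_mul_left _ h1)
    have h3 : (q + 1) * (q * s) ≤ (q + 1) * j := Nat.mul_le_mul_left _ hqs
    have h4 : q ^ 3 = q * q * q := by ring
    nlinarith
  set t := min (q - r) (s + 1) with ht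
  have ht1 : t ≤ s + 1 := min_le_right _ _
  have ht2 : t ≤ q - r := min_le_left _ _
  have ht3 : t = q - r ∨ t = s + 1 := by
    rcases le_total (q - r) (s + 1) with h | h
    · exact Or.inl (min_eq_left h)
    · exact Or.inr (min_eq_right h)
  clear_value t
  have hti : ∀ i, t ≤ i → i < s + 1 → q ≤ r + i := by
    intro i h1 h2
    omega
  set cf : ℕ → F := fun i => (-1 : F) ^ i * (s.choose i : F) with hcf
  set A : R := ∑ i ∈ range t, monomial (D2 ((q+1)*(s-i)) (r+i)) (cf i) with hA
  set P : R := ∑ i ∈ Ico t (s+1), monomial (D2 ((q+1)*(s-i)) (r+i-q)) (cf i) with hP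
  set S1 : R := ∑ i ∈ Ico t (s+1), monomial (D2 ((q+1)*(s+1-i)) (r+i-q)) (cf i) with hS1
  set S2 : R := ∑ i ∈ Ico t (s+1), monomial (D2 ((q+1)*(s-i)) (r+i-q+1)) (cf i) with hS2
  -- the three structural identities
  have hS1P : S1 = x ^ (q+1) * P := by
    rw [hS1, hP, Finset.mul_sum]
    refine Finset.sum_congr rfl fun i hi => ?_
    rw [Finset.mem_Ico] at hi
    rw [hx, X_pow_eq_monomial, monomial_mul, one_mul,
      show Finsupp.single (0 : Fin 2) (q+1) = D2 (q+1) 0 by simp [D2], D2_add]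
    refine congrArg (fun d => monomial d (cf i)) (D2_congr ?_ (Nat.zero_add _).symm)
    have h2 : s + 1 - i = (s - i) + 1 := by omega
    rw [h2]
    ring
  have hS2P : S2 = y * P := by
    rw [hS2, hP, Finset.mul_sum]
    refine Finset.sum_congr rfl fun i hi => ?_
    rw [Finset.mem_Ico] at hi
    rw [hy, show (X 1 : R) = X 1 ^ 1 by ring, X_pow_eq_monomial, monomial_mul, one_mul,
      show Finsupp.single (1 : Fin 2) 1 = D2 0 1 by simp [D2], D2_add]
    refine congrArg (fun d => monomial d (cf i)) (D2_congr (Nat.zero_add _).symm ?_)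
    have := hti i hi.1 hi.2
    omega
  have hbin : (x ^ (q+1) - y) ^ s * y ^ r = ∑ i ∈ range (s+1),
      monomial (D2 ((q+1)*(s-i)) (r+i)) (cf i) := by
    rw [show x ^ (q+1) - y = -y + x ^ (q+1) by ring, add_pow, Finset.sum_mul]
    refine Finset.sum_congr rfl fun i hi => ?_
    rw [Finset.mem_range] at hi
    rw [monoD2, hcf]
    simp only [map_mul, map_pow, map_neg, map_one, map_natCast]
    rw [← pow_mul x, ← hx, ← hy]
    rw [pow_add y r i]
    ring
  have hsplit : ∑ i ∈ range (s+1), monomial (D2 ((q+1)*(s-i)) (r+i)) (cf i)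
      = A + P * y ^ q := by
    rw [hA, hP, Finset.sum_mul]
    have h1 : ∀ i ∈ Ico t (s+1),
        monomial (D2 ((q+1)*(s-i)) (r+i-q)) (cf i) * y ^ q
        = monomial (D2 ((q+1)*(s-i)) (r+i)) (cf i) := by
      intro i hi
      rw [Finset.mem_Ico] at hi
      rw [hy, X_pow_eq_monomial, monomial_mul, mul_one,
        show Finsupp.single (1 : Fin 2) q = D2 0 q by simp [D2], D2_add]
      refine congrArg (fun d => monomial d (cf i)) (D2_congr (Nat.add_zero _).symm ?_)
      have := hti i hi.1 hi.2
      omega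
    rw [Finset.sum_congr rfl h1, Finset.range_eq_Ico,
      ← Finset.sum_Ico_consecutive _ (Nat.zero_le t) (by omega : t ≤ s + 1),
      ← Finset.range_eq_Ico]
  -- key identity
  have hkey : (x ^ (q+1) - y) ^ s * y ^ r = (A + (S1 - S2)) + P * g := by
    rw [hbin, hsplit, hS1P, hS2P, show y ^ q = g + x ^ (q+1) - y by rw [hg]; ring]
    ring
  -- support containments
  have hsupA : A.support ⊆ (range t).image (fun i => D2 ((q+1)*(s-i)) (r+i)) := by
    refine support_sum.trans ?_
    intro d hd
    rw [Finset.mem_biUnion] at hd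
    obtain ⟨i, hi, hdi⟩ := hd
    have hd1 := support_monomial_subset hdi
    rw [Finset.mem_singleton] at hd1
    subst hd1
    exact Finset.mem_image_of_mem _ hi
  have hsupS1 : S1.support ⊆ (Icc t (s+1)).image (fun i => D2 ((q+1)*(s+1-i)) (r+i-q)) := by
    refine support_sum.trans ?_
    intro d hd
    rw [Finset.mem_biUnion] at hd
    obtain ⟨i, hi, hdi⟩ := hd
    have hd1 := support_monomial_subset hdi
    rw [Finset.mem_singleton] at hd1
    subst hd1
    rw [Finset.mem_Ico] at hi
    exact Finset.mem_image.mpr ⟨i, Finset.mem_Icc.mpr ⟨hi.1, by omega⟩, rfl⟩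
  have hsupS2 : S2.support ⊆ (Icc t (s+1)).image (fun i => D2 ((q+1)*(s+1-i)) (r+i-q)) := by
    refine support_sum.trans ?_
    intro d hd
    rw [Finset.mem_biUnion] at hd
    obtain ⟨i, hi, hdi⟩ := hd
    have hd1 := support_monomial_subset hdi
    rw [Finset.mem_singleton] at hd1
    subst hd1
    rw [Finset.mem_Ico] at hi
    refine Finset.mem_image.mpr ⟨i + 1, Finset.mem_Icc.mpr ⟨by omega, by omega⟩, ?_⟩
    refine D2_congr (congrArg ((q+1) * ·) (by omega)) ?_
    have := hti i hi.1 hi.2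
    omega
  have hsupf : (A + (S1 - S2)).support ⊆
      (range t).image (fun i => D2 ((q+1)*(s-i)) (r+i)) ∪
      (Icc t (s+1)).image (fun i => D2 ((q+1)*(s+1-i)) (r+i-q)) := by
    intro d hd
    have h1 := MvPolynomial.support_add hd
    rw [Finset.mem_union] at h1
    rcases h1 with h1 | h1
    · exact Finset.mem_union_left _ (hsupA h1)
    · have h2 := MvPolynomial.support_sub _ _ _ h1
      rw [Finset.mem_union] at h2
      rcases h2 with h2 | h2
      · exact Finset.mem_union_right _ (hsupS1 h2)
      · exact Finset.mem_union_right _ (hsupS2 h2)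
  refine ⟨A + (S1 - S2), ?_, ?_, ?_, ?_⟩
  · -- degreeOf
    rw [degreeOf_le_iff]
    intro d hd
    rcases Finset.mem_union.mp (hsupf hd) with h | h
    · obtain ⟨i, hi, rfl⟩ := Finset.mem_image.mp h
      rw [Finset.mem_range] at hi
      rw [D2_apply1]
      omega
    · obtain ⟨i, hi, rfl⟩ := Finset.mem_image.mp h
      rw [Finset.mem_Icc] at hi
      rw [D2_apply1]
      omega
  · -- ideal membership
    have hyj : y ^ j = (y ^ q) ^ s * y ^ r := by rw [← hj', pow_add, pow_mul]
    have heq : y ^ j - (A + (S1 - S2)) =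
        ((y ^ q) ^ s - (x ^ (q+1) - y) ^ s) * y ^ r + P * g := by
      rw [hyj]
      linear_combination hkey
    rw [heq]
    refine Ideal.mem_span_singleton.mpr (dvd_add ?_ (dvd_mul_left g P))
    refine Dvd.dvd.mul_right ?_ _
    have h1 := sub_dvd_pow_sub_pow (y ^ q) (x ^ (q+1) - y) s
    rwa [show y ^ q - (x ^ (q+1) - y) = g by rw [hg]; ring] at h1
  · -- support card
    calc (A + (S1 - S2)).support.card
        ≤ ((range t).image (fun i => D2 ((q+1)*(s-i)) (r+i)) ∪
          (Icc t (s+1)).image (fun i => D2 ((q+1)*(s+1-i)) (r+i-q))).card :=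
          Finset.card_le_card hsupf
      _ ≤ ((range t).image (fun i => D2 ((q+1)*(s-i)) (r+i))).card +
          ((Icc t (s+1)).image (fun i => D2 ((q+1)*(s+1-i)) (r+i-q))).card :=
          Finset.card_union_le _ _
      _ ≤ t + (s + 2 - t) := by
          refine Nat.add_le_add ?_ ?_
          · exact (Finset.card_image_le).trans_eq (Finset.card_range t)
          · refine (Finset.card_image_le).trans_eq ?_
            rw [Nat.card_Icc]
      _ ≤ q + 1 := by omega
  · -- weights
    intro d hd
    rw [← hj']
    rcases Finset.mem_union.mp (hsupf hd) with h | h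
    · obtain ⟨i, hi, rfl⟩ := Finset.mem_image.mp h
      rw [Finset.mem_range] at hi
      rw [D2_apply0, D2_apply1]
      exact wt1 q s r i (by omega) (by omega)
    · obtain ⟨i, hi, rfl⟩ := Finset.mem_image.mp h
      rw [Finset.mem_Icc] at hi
      rw [D2_apply0, D2_apply1]
      rcases Nat.lt_or_ge (r + i) q with h2 | h2
      · have hi2 : i = s + 1 := by
          rcases Nat.lt_or_ge i (s+1) with h3 | h3
          · exact absurd (hti i hi.1 h3) (by omega)
          · omega
        subst hi2
        simp [show s + 1 - (s+1) = 0 from by omega, show r + (s+1) - q = 0 from by omega]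
      · exact wt2 q s r i (by omega) hi.2 h2
end
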